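/- arXiv:2212.07713 — 6 statements merged into one kernel-verified Lean document; each statement's English description precedes it below -/
import Mathlib

section
/- Let k and l be positive integers, n = kl, and let g_1, …, g_k be balanced l-variable Boolean functions. Define the vectorial Boolean function 𝒢 : F_2^n → F_2^k by 𝒢(x) = (g_1(x^{(1)}), …, g_k(x^{(k)})), where x ∈ F_2^n is split into consecutive blocks x^{(1)}, …, x^{(k)} ∈ F_2^l. Then for every k-variable Boolean function f and every u ∈ F_2^n: W_{f∘𝒢}(u) = W_f(0_k) if u = 0_n, and otherwise W_{f∘𝒢}(u) = W_f(w_u) · ∏_{i ∈ supp(w_u)} W_{g_i}(u^{(i)}), where w_u ∈ F_2^k is the vector whose i-th bit is 1 if and only if the block u^{(i)} ≠ 0_l. -/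
open Finset

/-- Interpret a bit as a natural number. -/
def b2n (b : Bool) : ℕ := if b then 1 else 0

/-- Hamming weight of a vector in `F_2^ι`. -/
def bwt {ι : Type*} [Fintype ι] (α : ι → Bool) : ℕ :=
  (Finset.univ.filter fun i => α i = true).card

/-- Inner product `⟨v,w⟩ = v_1 w_1 ⊕ ⋯ ⊕ v_n w_n` over `F_2`. -/
def bip {ι : Type*} [Fintype ι] (v w : ι → Bool) : Bool :=
  decide ((∑ i, b2n (v i && w i)) % 2 = 1)

/-- Normalised Walsh transform of a Boolean function:
`W_f(α) = 2^{-n} Σ_x (-1)^{f(x) ⊕ ⟨x,α⟩}`. -/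
noncomputable def walsh {ι : Type*} [Fintype ι] [DecidableEq ι]
    (f : (ι → Bool) → Bool) (α : ι → Bool) : ℝ :=
  (2 ^ Fintype.card ι : ℝ)⁻¹ *
    ∑ x : ι → Bool, (-1 : ℝ) ^ (b2n (f x) + ∑ i, b2n (x i && α i))

/-- Fourier min-entropy `H_∞(f) = min_{α : W_f(α) ≠ 0} log₂ (1 / W_f(α)²)`. -/
noncomputable def minEntropy {ι : Type*} [Fintype ι] [DecidableEq ι]
    (f : (ι → Bool) → Bool) : ℝ :=
  sInf {y : ℝ | ∃ α : ι → Bool, walsh f α ≠ 0 ∧ y = Real.logb 2 (1 / (walsh f α) ^ 2)}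

/-- Fourier entropy `H(f) = Σ_{α : W_f(α) ≠ 0} W_f(α)² log₂ (1 / W_f(α)²)`. -/
noncomputable def fourierEntropy {ι : Type*} [Fintype ι] [DecidableEq ι]
    (f : (ι → Bool) → Bool) : ℝ :=
  ∑ α : ι → Bool,
    if walsh f α = 0 then 0
    else (walsh f α) ^ 2 * Real.logb 2 (1 / (walsh f α) ^ 2)

/-- Total influence `Inf(f) = Σ_i Pr_x [f(x) ≠ f(x ⊕ e_i)]`. -/
noncomputable def influence {ι : Type*} [Fintype ι] [DecidableEq ι]
    (f : (ι → Bool) → Bool) : ℝ :=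
  ∑ i : ι,
    ((Finset.univ.filter fun x : ι → Bool =>
       f x ≠ f (Function.update x i (!x i))).card : ℝ) / 2 ^ Fintype.card ι

/-- `f` is balanced if `|supp(f)| = 2^{n-1}`. -/
def balanced {ι : Type*} [Fintype ι] [DecidableEq ι] (f : (ι → Bool) → Bool) : Prop :=
  (Finset.univ.filter fun x : ι → Bool => f x = true).card = 2 ^ (Fintype.card ι - 1)

/-- Disjoint composition `(f ⋄ g)(x) = f(g(x^{(1)}), …, g(x^{(k)}))`, where the input in
`F_2^{k·l}` is viewed as `k` blocks of length `l`. -/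
def disjComp {ι κ : Type*} (f : (ι → Bool) → Bool) (g : (κ → Bool) → Bool) :
    (ι × κ → Bool) → Bool :=
  fun x => f fun i => g fun j => x (i, j)

/-- The palindromic-type construction
`g_b(X_{n+1}, X_n, …, X_1) = (1 ⊕ X_{n+1})·g(X_n,…,X_1) ⊕ X_{n+1}·(b ⊕ g(1⊕X_n,…,1⊕X_1))`,
where the extra variable `X_{n+1}` is placed at index `0`. -/
def palin {n : ℕ} (g : (Fin n → Bool) → Bool) (b : Bool) :
    (Fin (n + 1) → Bool) → Bool :=
  fun x => if x 0 = true then xor b (g fun i => !x i.succ) else g fun i => x i.succ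

/-- `ε_b(g) = Σ_{α : wt(α) ≢ b (mod 2)} W_g(α)²`. -/
noncomputable def eps {n : ℕ} (g : (Fin n → Bool) → Bool) (b : Bool) : ℝ :=
  ∑ α ∈ Finset.univ.filter fun α : Fin n → Bool => ¬bwt α % 2 = b2n b, (walsh g α) ^ 2

/-- `f` is `t`-resilient if `W_f(α) = 0` whenever `wt(α) ≤ t`. -/
def resilient {ι : Type*} [Fintype ι] [DecidableEq ι]
    (f : (ι → Bool) → Bool) (t : ℕ) : Prop :=
  ∀ α : ι → Bool, bwt α ≤ t → walsh f α = 0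

/-- `f` is plateaued if its Walsh transform takes values in `{0, c, -c}` for some `c`. -/
def plateaued {ι : Type*} [Fintype ι] [DecidableEq ι] (f : (ι → Bool) → Bool) : Prop :=
  ∃ c : ℝ, ∀ α : ι → Bool, walsh f α = 0 ∨ walsh f α = c ∨ walsh f α = -c

/-- `a_i = max_{w : wt(w) = i} W_f(w)²`. -/
noncomputable def maxWsqAt {ι : Type*} [Fintype ι] [DecidableEq ι]
    (f : (ι → Bool) → Bool) (i : ℕ) : ℝ :=
  sSup {z : ℝ | ∃ w : ι → Bool, bwt w = i ∧ z = (walsh f w) ^ 2}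

/-- Index type for the O'Donnell–Tan recursion: `f_m` is a function of `l^{m+1}` variables. -/
def OTIndex (l : ℕ) : ℕ → Type
  | 0 => Fin l
  | m + 1 => Fin l × OTIndex l m

instance OTIndex.instFintype (l : ℕ) : (m : ℕ) → Fintype (OTIndex l m)
  | 0 => inferInstanceAs (Fintype (Fin l))
  | m + 1 => letI := OTIndex.instFintype l m
             inferInstanceAs (Fintype (Fin l × OTIndex l m))

instance OTIndex.instDecidableEq (l : ℕ) : (m : ℕ) → DecidableEq (OTIndex l m)
  | 0 => inferInstanceAs (DecidableEq (Fin l))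
  | m + 1 => letI := OTIndex.instDecidableEq l m
             inferInstanceAs (DecidableEq (Fin l × OTIndex l m))

/-- The O'Donnell–Tan recursion `f_0 = g`, `f_m = g ⋄ f_{m-1}`. -/
def OTfun {l : ℕ} (g : (Fin l → Bool) → Bool) : (m : ℕ) → (OTIndex l m → Bool) → Bool
  | 0 => g
  | m + 1 => disjComp g (OTfun g m)

lemma neg_one_pow_and (a b c : Bool) :
    (-1:ℝ)^(b2n (a&&c) + b2n (b&&c)) = (-1)^(b2n ((xor a b) && c)) := by
  cases a <;> cases b <;> cases c <;> norm_num [b2n]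

lemma orth {ι : Type*} [Fintype ι] [DecidableEq ι] (z : ι → Bool) :
    ∑ w : ι → Bool, (-1:ℝ) ^ (∑ i, b2n (z i && w i)) =
      if z = (fun _ => false) then (2:ℝ) ^ Fintype.card ι else 0 := by
  by_cases hz : z = (fun _ => false)
  · subst hz
    simp [b2n, Fintype.card_fun]
  · rw [if_neg hz]
    have : ∃ i0, z i0 = true := by
      by_contra h
      push_neg at h
      exact hz (funext fun i => by simpa using h i)
    obtain ⟨i0, hi0⟩ := this
    apply Finset.sum_ninvolution (fun w => Function.update w i0 (!w i0))
    · intro w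
      have hsplit : ∀ v : ι → Bool, ∑ i, b2n (z i && v i) =
          b2n (z i0 && v i0) + ∑ i ∈ univ.erase i0, b2n (z i && v i) := by
        intro v
        rw [← Finset.add_sum_erase _ (fun i => b2n (z i && v i)) (mem_univ i0)]
      rw [hsplit w, hsplit (Function.update w i0 (!w i0))]
      have herase : ∑ i ∈ univ.erase i0, b2n (z i && Function.update w i0 (!w i0) i) =
          ∑ i ∈ univ.erase i0, b2n (z i && w i) := by
        apply Finset.sum_congr rfl
        intro i hi
        rw [Function.update_of_ne (Finset.ne_of_mem_erase hi)]
      rw [herase, Function.update_self, hi0]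
      cases hw : w i0 <;> simp [b2n, pow_add]
    · intro w _
      intro h
      have := congrFun h i0
      rw [Function.update_self] at this
      simp at this
    · intro w; exact mem_univ _
    · intro w
      funext i
      by_cases hi : i = i0
      · subst hi; simp
      · simp [Function.update_of_ne hi]

lemma inv_formula {ι : Type*} [Fintype ι] [DecidableEq ι]
    (f : (ι → Bool) → Bool) (y : ι → Bool) :
    ∑ w : ι → Bool, walsh f w * (-1:ℝ) ^ (∑ i, b2n (y i && w i)) =
      (-1:ℝ) ^ (b2n (f y)) := by
  have key : ∀ (x w : ι → Bool),
      (-1:ℝ) ^ (b2n (f x) + ∑ i, b2n (x i && w i)) * (-1:ℝ) ^ (∑ i, b2n (y i && w i)) =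
      (-1:ℝ) ^ (b2n (f x)) * (-1:ℝ) ^ (∑ i, b2n ((xor (x i) (y i)) && w i)) := by
    intro x w
    rw [pow_add, mul_assoc, ← pow_add]
    congr 1
    rw [← Finset.sum_add_distrib]
    rw [← Finset.prod_pow_eq_pow_sum, ← Finset.prod_pow_eq_pow_sum]
    exact Finset.prod_congr rfl fun i _ => neg_one_pow_and (x i) (y i) (w i)
  simp only [walsh, mul_assoc, Finset.sum_mul]
  rw [← Finset.mul_sum, Finset.sum_comm]
  simp only [key]
  simp only [← Finset.mul_sum]
  have horth : ∀ x : ι → Bool,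
      ∑ w : ι → Bool, (-1:ℝ) ^ (∑ i, b2n ((xor (x i) (y i)) && w i)) =
      if x = y then (2:ℝ) ^ Fintype.card ι else 0 := by
    intro x
    rw [orth (fun i => xor (x i) (y i))]
    congr 1
    simp only [eq_iff_iff]
    constructor
    · intro h
      funext i
      have := congrFun h i
      simpa using this
    · intro h; subst h; funext i; simp
  simp only [horth, mul_ite, mul_zero]
  rw [Finset.sum_ite_eq' Finset.univ y]
  simp [mul_comm, mul_assoc]

lemma walsh_zero_balanced {ι : Type*} [Fintype ι] [DecidableEq ι]
    (f : (ι → Bool) → Bool)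
    (h : (Finset.univ.filter fun x : ι → Bool => f x = true).card = 2 ^ (Fintype.card ι - 1))
    (hpos : 0 < Fintype.card ι) :
    walsh f (fun _ => false) = 0 := by
  unfold walsh
  have : ∑ x : ι → Bool, (-1:ℝ) ^ (b2n (f x) + ∑ i, b2n (x i && false)) = 0 := by
    have h1 : ∀ x : ι → Bool,
        (-1:ℝ) ^ (b2n (f x) + ∑ i, b2n (x i && false)) =
        if f x = true then (-1:ℝ) else 1 := by
      intro x; cases hfx : f x <;> simp [b2n, hfx]
    simp only [h1]
    rw [Finset.sum_ite, Finset.sum_const, Finset.sum_const]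
    have hcard2 : (Finset.univ.filter fun x : ι → Bool => ¬ f x = true).card =
        2 ^ Fintype.card ι - 2 ^ (Fintype.card ι - 1) := by
      have := Finset.card_filter_add_card_filter_not
        (s := (Finset.univ : Finset (ι → Bool))) (p := fun x => f x = true)
      rw [h] at this
      have hcu : (Finset.univ : Finset (ι → Bool)).card = 2 ^ Fintype.card ι := by
        simp [Fintype.card_fun]
      omega
    rw [h, hcard2]
    have hsplit : 2 ^ Fintype.card ι = 2 ^ (Fintype.card ι - 1) + 2 ^ (Fintype.card ι - 1) := by
      have : Fintype.card ι - 1 + 1 = Fintype.card ι := by omega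
      rw [← this, pow_succ, Nat.add_sub_cancel]; omega
    rw [hsplit, Nat.add_sub_cancel]
    simp
  rw [this, mul_zero]

lemma sum_prod_blocks {k l : ℕ} (F : Fin k → (Fin l → Bool) → ℝ) :
    ∑ x : Fin k × Fin l → Bool, ∏ i, F i (fun j => x (i, j)) =
      ∏ i, ∑ v : Fin l → Bool, F i v := by
  have h := @Fintype.prod_sum (Fin k) ℝ _ _ _ (fun _ => Fin l → Bool) _ F
  refine Eq.trans ?_ h.symm
  exact Fintype.sum_equiv (Equiv.curry (Fin k) (Fin l) Bool) (fun x => ∏ i, F i (fun j => x (i, j))) (fun y => ∏ i, F i (y i)) (fun y => rfl)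

/-- Walsh transform of the composition `f ∘ 𝒢` where `𝒢` applies balanced functions
`g_1, …, g_k` to the `k` consecutive length-`l` blocks of the input. -/
theorem stmt0 {k l : ℕ} (hk : 0 < k) (hl : 0 < l)
    (g : Fin k → (Fin l → Bool) → Bool) (hg : ∀ i, balanced (g i))
    (f : (Fin k → Bool) → Bool) (u : Fin k × Fin l → Bool) :
    walsh (fun x : Fin k × Fin l → Bool => f fun i => g i fun j => x (i, j)) u =
      if u = fun _ => false then walsh f fun _ => false
      else
        walsh f (fun i => !decide (∀ j : Fin l, u (i, j) = false)) *
          ∏ i ∈ Finset.univ.filter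
              (fun i : Fin k => (!decide (∀ j : Fin l, u (i, j) = false)) = true),
            walsh (g i) fun j => u (i, j) := by

  set W : Fin k → Bool := fun i => !decide (∀ j : Fin l, u (i, j) = false) with hW
  set S : Fin k → Bool → ℝ := fun i b =>
    (2 ^ l : ℝ)⁻¹ * ∑ v : Fin l → Bool,
      (-1:ℝ) ^ (b2n (g i v && b) + ∑ j, b2n (v j && u (i, j))) with hS
  have hStrue : ∀ i, S i true = walsh (g i) (fun j => u (i, j)) := by
    intro i
    simp [hS, walsh, Fintype.card_fun]
  have hSfalse : ∀ i, S i false =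
      if (fun j => u (i, j)) = (fun _ => false) then 1 else 0 := by
    intro i
    have h0 : ∀ v : Fin l → Bool,
        b2n (g i v && false) + ∑ j, b2n (v j && u (i, j)) =
        ∑ j, b2n (u (i, j) && v j) := by
      intro v
      simp only [Bool.and_false, b2n, if_neg Bool.false_ne_true, zero_add]
      exact Finset.sum_congr rfl fun j _ => by rw [Bool.and_comm]
    simp only [hS, h0]
    rw [orth (fun j => u (i, j))]
    split <;> simp [Fintype.card_fun]
  have main : walsh (fun x : Fin k × Fin l → Bool => f fun i => g i fun j => x (i, j)) u =
      ∑ w : Fin k → Bool, walsh f w * ∏ i, S i (w i) := by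
    have hinv : ∀ x : Fin k × Fin l → Bool,
        (-1:ℝ) ^ (b2n (f fun i => g i fun j => x (i, j)) + ∑ p, b2n (x p && u p)) =
        ∑ w : Fin k → Bool, walsh f w *
          ((-1:ℝ) ^ (∑ i, b2n ((g i fun j => x (i, j)) && w i)) *
          (-1:ℝ) ^ (∑ p : Fin k × Fin l, b2n (x p && u p))) := by
      intro x
      rw [pow_add, ← inv_formula f (fun i => g i fun j => x (i, j)), Finset.sum_mul]
      exact Finset.sum_congr rfl fun w _ => by ring
    conv_lhs => rw [walsh]
    simp only [hinv]
    rw [Finset.sum_comm, Finset.mul_sum]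
    apply Finset.sum_congr rfl
    intro w _
    rw [← Finset.mul_sum, ← mul_assoc, mul_comm _ (walsh f w), mul_assoc]
    congr 1
    have hcomb : ∀ x : Fin k × Fin l → Bool,
        (-1:ℝ) ^ (∑ i, b2n ((g i fun j => x (i, j)) && w i)) *
          (-1:ℝ) ^ (∑ p : Fin k × Fin l, b2n (x p && u p)) =
        ∏ i : Fin k, (-1:ℝ) ^ (b2n ((g i fun j => x (i, j)) && w i)
            + ∑ j, b2n (x (i, j) && u (i, j))) := by
      intro x
      rw [Fintype.sum_prod_type, ← pow_add, ← Finset.sum_add_distrib,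
        ← Finset.prod_pow_eq_pow_sum]
    simp only [hcomb]
    rw [sum_prod_blocks (fun i v =>
      (-1:ℝ) ^ (b2n (g i v && w i) + ∑ j, b2n (v j && u (i, j))))]
    simp only [hS]
    rw [Finset.prod_mul_distrib, Finset.prod_const, Finset.card_univ]
    congr 1
    simp only [Fintype.card_prod, Fintype.card_fin]
    rw [mul_comm k l, pow_mul, inv_pow]
  have hcollapse : ∑ w : Fin k → Bool, walsh f w * ∏ i, S i (w i) =
      walsh f W * ∏ i, S i (W i) := by
    apply Finset.sum_eq_single W
    · intro w _ hw
      have hex : ∃ i, w i ≠ W i := by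
        by_contra h; push_neg at h; exact hw (funext h)
      obtain ⟨i, hi⟩ := hex
      have hzero : S i (w i) = 0 := by
        cases hwi : w i
        · have hWi : W i = true := by
            cases hWi : W i
            · exact absurd (hwi.trans hWi.symm) hi
            · rfl
          rw [hSfalse i, if_neg]
          intro hcontra
          have h1 : ¬∀ j, u (i, j) = false := by simpa [hW] using hWi
          exact h1 (fun j => congrFun hcontra j)
        · have hWi : W i = false := by
            cases hWi : W i
            · rfl
            · exact absurd (hwi.trans hWi.symm) hi
          have h1 : ∀ j, u (i, j) = false := by simpa [hW] using hWi
          rw [hStrue i, funext h1]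
          exact walsh_zero_balanced (g i) (hg i) (by simp [hl])
      rw [Finset.prod_eq_zero (Finset.mem_univ i) hzero, mul_zero]
    · intro h; exact absurd (Finset.mem_univ W) h
  have hprod : ∏ i, S i (W i) =
      ∏ i ∈ Finset.univ.filter (fun i : Fin k => W i = true),
        walsh (g i) (fun j => u (i, j)) := by
    rw [← Finset.prod_filter_mul_prod_filter_not Finset.univ (fun i => W i = true)]
    have h1 : ∏ i ∈ Finset.univ.filter (fun i : Fin k => W i = true), S i (W i) =
        ∏ i ∈ Finset.univ.filter (fun i : Fin k => W i = true),
          walsh (g i) (fun j => u (i, j)) := by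
      apply Finset.prod_congr rfl
      intro i hi
      rw [(Finset.mem_filter.mp hi).2, hStrue]
    have h2 : ∏ i ∈ Finset.univ.filter (fun i : Fin k => ¬ W i = true), S i (W i) = 1 := by
      apply Finset.prod_eq_one
      intro i hi
      have hWi : W i = false := by
        have hmem := (Finset.mem_filter.mp hi).2
        cases h : W i
        · rfl
        · exact absurd h hmem
      have h1' : ∀ j, u (i, j) = false := by simpa [hW] using hWi
      rw [hWi, hSfalse i, if_pos (funext h1')]
    rw [h1, h2, mul_one]
  have hfilt : (Finset.univ.filter
      fun i : Fin k => (!decide (∀ j : Fin l, u (i, j) = false)) = true) =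
      Finset.univ.filter (fun i : Fin k => W i = true) := by
    simp only [hW]
  rw [main, hcollapse, hprod]
  by_cases hu : u = fun _ => false
  · rw [if_pos hu]
    have hW0 : W = fun _ => false := by
      funext i
      simp [hW, hu]
    rw [hW0]
    simp
  · rw [if_neg hu, hfilt]
end

section
/- Let k and l be positive integers, let f be a k-variable Boolean function, and let g be a balanced l-variable Boolean function. For 0 ≤ i ≤ k, let a_i = max_{w ∈ F_2^k, wt(w) = i} W_f(w)². Then H_∞(f ⋄ g) = min over those i ∈ {0, …, k} with a_i > 0 of (−log₂(a_i) + i · H_∞(g)). -/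
open Finset

lemma sum_char2 {ι : Type*} [Fintype ι] [DecidableEq ι] (z y : ι → Bool) :
    ∑ w : ι → Bool, (-1:ℝ)^(∑ i, b2n (z i && w i) + ∑ i, b2n (y i && w i))
      = if z = y then (2:ℝ)^(Fintype.card ι) else 0 := by
  have h1 : ∀ w : ι → Bool, (-1:ℝ)^(∑ i, b2n (z i && w i) + ∑ i, b2n (y i && w i))
      = ∏ i, (-1:ℝ)^(b2n (z i && w i) + b2n (y i && w i)) := by
    intro w
    rw [← Finset.sum_add_distrib, Finset.prod_pow_eq_pow_sum]
  simp_rw [h1]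
  rw [← Fintype.piFinset_univ,
    ← Finset.prod_univ_sum (fun _ => (univ : Finset Bool))
      (fun i b => (-1:ℝ)^(b2n (z i && b) + b2n (y i && b)))]
  have h2 : ∀ i, (∑ b : Bool, (-1:ℝ)^(b2n (z i && b) + b2n (y i && b)))
      = if z i = y i then 2 else 0 := by
    intro i
    cases hz : z i <;> cases hy : y i <;> simp [b2n]
  simp_rw [h2]
  by_cases h : z = y
  · subst h; simp
  · rw [if_neg h]
    obtain ⟨i, hi⟩ : ∃ i, z i ≠ y i := by
      by_contra hc; push_neg at hc; exact h (funext hc)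
    exact Finset.prod_eq_zero (Finset.mem_univ i) (if_neg hi)

lemma walsh_inversion {ι : Type*} [Fintype ι] [DecidableEq ι]
    (f : (ι → Bool) → Bool) (y : ι → Bool) :
    ∑ w : ι → Bool, walsh f w * (-1:ℝ)^(∑ i, b2n (y i && w i)) = (-1:ℝ)^(b2n (f y)) := by
  have h1 : ∀ w : ι → Bool, walsh f w * (-1:ℝ)^(∑ i, b2n (y i && w i))
      = (2 ^ Fintype.card ι : ℝ)⁻¹ * ∑ x : ι → Bool,
          (-1:ℝ)^(b2n (f x)) * (-1:ℝ)^(∑ i, b2n (x i && w i) + ∑ i, b2n (y i && w i)) := by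
    intro w
    rw [walsh, mul_assoc, Finset.sum_mul]
    congr 1
    refine Finset.sum_congr rfl fun x _ => ?_
    rw [pow_add, pow_add, mul_assoc]
  simp_rw [h1, ← Finset.mul_sum]
  rw [Finset.sum_comm]
  have h2 : ∀ x : ι → Bool,
      (∑ w : ι → Bool, (-1:ℝ)^(b2n (f x)) * (-1:ℝ)^(∑ i, b2n (x i && w i) + ∑ i, b2n (y i && w i)))
      = (-1:ℝ)^(b2n (f x)) * (if x = y then (2:ℝ)^(Fintype.card ι) else 0) := by
    intro x
    rw [← Finset.mul_sum, sum_char2]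
  simp_rw [h2]
  simp_rw [mul_ite, mul_zero, Finset.sum_ite_eq' Finset.univ y
    (fun x => (-1:ℝ)^(b2n (f x)) * (2:ℝ)^(Fintype.card ι))]
  rw [mul_comm ((2 ^ Fintype.card ι : ℝ)⁻¹), if_pos (Finset.mem_univ y), mul_assoc,
    mul_inv_cancel₀ (by positivity), mul_one]

lemma exists_walsh_ne_zero {ι : Type*} [Fintype ι] [DecidableEq ι]
    (f : (ι → Bool) → Bool) : ∃ w : ι → Bool, walsh f w ≠ 0 := by
  by_contra hc
  push_neg at hc
  have h := walsh_inversion f (fun _ => false)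
  simp_rw [hc, zero_mul, Finset.sum_const_zero] at h
  have : (-1:ℝ)^(b2n (f fun _ => false)) ≠ 0 := by positivity
  exact this h.symm

lemma walsh_zero_of_balanced {ι : Type*} [Fintype ι] [DecidableEq ι]
    (g : (ι → Bool) → Bool) (hg : balanced g) (h : 0 < Fintype.card ι) :
    walsh g (fun _ => false) = 0 := by
  rw [walsh]
  apply mul_eq_zero_of_right
  have h1 : ∀ x : ι → Bool, (-1:ℝ)^(b2n (g x) + ∑ i, b2n (x i && false)) =
      if g x = true then -1 else 1 := by
    intro x
    simp only [Bool.and_false]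
    cases g x <;> simp [b2n]
  simp_rw [h1]
  rw [Finset.sum_ite, Finset.sum_const, Finset.sum_const]
  have h2 := Finset.card_filter_add_card_filter_not
    (s := (Finset.univ : Finset (ι → Bool))) (p := fun x => g x = true)
  rw [Finset.card_univ, Fintype.card_fun] at h2
  rw [balanced] at hg
  obtain ⟨m, hm⟩ : ∃ m, Fintype.card ι = m + 1 := ⟨Fintype.card ι - 1, (Nat.succ_pred_eq_of_pos h).symm⟩
  rw [Fintype.card_bool, hm] at h2
  rw [hm] at hg
  simp only [Nat.add_sub_cancel] at hg
  have hp : (2:ℕ)^(m+1) = 2^m + 2^m := by rw [pow_succ, mul_two]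
  have h3 : (Finset.univ.filter fun x : ι → Bool => ¬ g x = true).card = 2 ^ m := by omega
  rw [hg, h3, nsmul_eq_mul, nsmul_eq_mul]
  push_cast
  ring

lemma sum_char1 {ι : Type*} [Fintype ι] [DecidableEq ι] (z : ι → Bool) :
    ∑ w : ι → Bool, (-1:ℝ)^(∑ i, b2n (w i && z i))
      = if z = (fun _ => false) then (2:ℝ)^(Fintype.card ι) else 0 := by
  have h := sum_char2 z (fun _ => false)
  rw [← h]
  refine Finset.sum_congr rfl fun w _ => ?_
  congr 1
  have h1 : (∑ i, b2n (w i && z i)) = ∑ i, b2n (z i && w i) :=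
    Finset.sum_congr rfl fun i _ => by rw [Bool.and_comm]
  have h2 : (∑ i, b2n ((fun _ : ι => false) i && w i)) = 0 := by simp [b2n]
  rw [h1, h2, add_zero]

lemma walsh_sum_eq {ι : Type*} [Fintype ι] [DecidableEq ι]
    (g : (ι → Bool) → Bool) (β : ι → Bool) :
    ∑ z : ι → Bool, (-1:ℝ)^(b2n (g z) + ∑ j, b2n (z j && β j))
      = 2 ^ (Fintype.card ι) * walsh g β := by
  rw [walsh, ← mul_assoc, mul_inv_cancel₀ (by positivity), one_mul]

lemma walsh_disjComp {k l : ℕ} (hl : 0 < l)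
    (f : (Fin k → Bool) → Bool) (g : (Fin l → Bool) → Bool) (hg : balanced g)
    (α : Fin k × Fin l → Bool) :
    walsh (disjComp f g) α =
      walsh f (fun i => !decide ((fun j => α (i, j)) = fun _ => false)) *
        ∏ i : Fin k, (if (fun j => α (i, j)) = (fun _ => false) then 1
          else walsh g (fun j => α (i, j))) := by
  classical
  have hT : ∀ (i : Fin k) (b : Bool),
      (∑ z : Fin l → Bool, (-1:ℝ)^(b2n (g z && b) + ∑ j, b2n (z j && α (i, j))))
        = 2^l * (if b = (!decide ((fun j => α (i, j)) = fun _ => false))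
            then (if b then walsh g (fun j => α (i, j)) else 1) else 0) := by
    intro i b
    cases b
    · have hb : ∀ z : Fin l → Bool, b2n (g z && false) = 0 := by intro z; simp [b2n]
      simp only [hb, zero_add]
      rw [sum_char1 (fun j => α (i, j))]
      by_cases hz : (fun j => α (i, j)) = (fun _ : Fin l => false)
      · simp [hz, Fintype.card_fin]
      · simp [hz]
    · have hb : ∀ z : Fin l → Bool, b2n (g z && true) = b2n (g z) := by
        intro z; simp
      simp only [hb]
      rw [walsh_sum_eq g (fun j => α (i, j)), Fintype.card_fin]
      by_cases hz : (fun j => α (i, j)) = (fun _ : Fin l => false)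
      · rw [hz, walsh_zero_of_balanced g hg (by simpa [Fintype.card_fin] using hl)]
        simp [hz]
      · simp [hz]
  have e1 : ∀ X : Fin k → Fin l → Bool,
      (-1:ℝ)^(b2n (disjComp f g ((Equiv.curry (Fin k) (Fin l) Bool).symm X))
          + ∑ p : Fin k × Fin l, b2n ((Equiv.curry (Fin k) (Fin l) Bool).symm X p && α p))
      = ∑ w : Fin k → Bool, walsh f w *
          ∏ i : Fin k, (-1:ℝ)^(b2n (g (X i) && w i) + ∑ j, b2n (X i j && α (i, j))) := by
    intro X
    have hd : disjComp f g ((Equiv.curry (Fin k) (Fin l) Bool).symm X)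
        = f (fun i => g (X i)) := rfl
    have hx : ∀ p : Fin k × Fin l,
        ((Equiv.curry (Fin k) (Fin l) Bool).symm X) p = X p.1 p.2 := fun p => rfl
    rw [hd, pow_add, ← walsh_inversion f (fun i => g (X i)), Finset.sum_mul]
    refine Finset.sum_congr rfl fun w _ => ?_
    rw [mul_assoc, ← pow_add]
    congr 1
    have hs : (∑ p : Fin k × Fin l, b2n (((Equiv.curry (Fin k) (Fin l) Bool).symm X) p && α p))
        = ∑ i : Fin k, ∑ j : Fin l, b2n (X i j && α (i, j)) := by
      simp only [hx]
      rw [Fintype.sum_prod_type]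
    rw [hs, ← Finset.sum_add_distrib, ← Finset.prod_pow_eq_pow_sum]
  have key : (∑ x : Fin k × Fin l → Bool,
        (-1:ℝ)^(b2n (disjComp f g x) + ∑ p : Fin k × Fin l, b2n (x p && α p)))
      = 2^(k*l) * (walsh f (fun i => !decide ((fun j => α (i, j)) = fun _ => false)) *
          ∏ i : Fin k, (if (fun j => α (i, j)) = (fun _ => false) then 1
            else walsh g (fun j => α (i, j)))) := by
    rw [← Equiv.sum_comp (Equiv.curry (Fin k) (Fin l) Bool).symm
      (fun x => (-1:ℝ)^(b2n (disjComp f g x) + ∑ p : Fin k × Fin l, b2n (x p && α p)))]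
    rw [Finset.sum_congr rfl fun X _ => e1 X, Finset.sum_comm]
    have e2 : ∀ w : Fin k → Bool,
        (∑ X : Fin k → Fin l → Bool, walsh f w *
            ∏ i : Fin k, (-1:ℝ)^(b2n (g (X i) && w i) + ∑ j, b2n (X i j && α (i, j))))
        = walsh f w * ((2:ℝ)^(k*l) *
            (if w = (fun i => !decide ((fun j => α (i, j)) = fun _ => false))
             then ∏ i : Fin k, (if (fun j => α (i, j)) = (fun _ => false) then 1
               else walsh g (fun j => α (i, j))) else 0)) := by
      intro w
      rw [← Finset.mul_sum]
      congr 1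
      rw [← Fintype.piFinset_univ, ← Finset.prod_univ_sum (fun _ => (univ : Finset (Fin l → Bool)))
        (fun i z => (-1:ℝ)^(b2n (g z && w i) + ∑ j, b2n (z j && α (i, j))))]
      simp_rw [hT]
      rw [Finset.prod_mul_distrib, Finset.prod_const, Finset.card_univ, Fintype.card_fin]
      congr 1
      · rw [← pow_mul, mul_comm l k]
      · by_cases hw : w = (fun i => !decide ((fun j => α (i, j)) = fun _ => false))
        · rw [if_pos hw]
          refine Finset.prod_congr rfl fun i _ => ?_
          have hwi : w i = !decide ((fun j => α (i, j)) = fun _ => false) := by rw [hw]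
          rw [if_pos hwi, hwi]
          by_cases hz : (fun j => α (i, j)) = (fun _ : Fin l => false) <;> simp [hz]
        · rw [if_neg hw]
          obtain ⟨i, hi⟩ : ∃ i, w i ≠ (!decide ((fun j => α (i, j)) = fun _ => false)) := by
            by_contra hc; push_neg at hc; exact hw (funext hc)
          exact Finset.prod_eq_zero (Finset.mem_univ i) (if_neg hi)
    rw [Finset.sum_congr rfl fun w _ => e2 w]
    simp_rw [mul_ite, mul_zero]
    rw [Finset.sum_ite_eq' Finset.univ
      (fun i => !decide ((fun j => α (i, j)) = fun _ => false))
      (fun w => walsh f w * ((2:ℝ)^(k*l) *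
        ∏ i : Fin k, (if (fun j => α (i, j)) = (fun _ => false) then 1
          else walsh g (fun j => α (i, j)))))]
    rw [if_pos (Finset.mem_univ _)]
    ring
  rw [walsh, key]
  have hc : Fintype.card (Fin k × Fin l) = k * l := by simp
  rw [hc, ← mul_assoc, inv_mul_cancel₀ (by positivity), one_mul]

section Ent
variable {ι : Type*} [Fintype ι] [DecidableEq ι] (h : (ι → Bool) → Bool)

lemma entSet_finite :
    {y : ℝ | ∃ α : ι → Bool, walsh h α ≠ 0 ∧ y = Real.logb 2 (1 / (walsh h α) ^ 2)}.Finite := by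
  apply Set.Finite.subset
    (Set.finite_range (fun α : ι → Bool => Real.logb 2 (1 / (walsh h α) ^ 2)))
  rintro y ⟨α, _, rfl⟩; exact ⟨α, rfl⟩

lemma entSet_nonempty :
    {y : ℝ | ∃ α : ι → Bool, walsh h α ≠ 0 ∧ y = Real.logb 2 (1 / (walsh h α) ^ 2)}.Nonempty := by
  obtain ⟨w, hw⟩ := exists_walsh_ne_zero h
  exact ⟨_, w, hw, rfl⟩

lemma minEntropy_le (α : ι → Bool) (hα : walsh h α ≠ 0) :
    minEntropy h ≤ Real.logb 2 (1 / (walsh h α) ^ 2) :=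
  csInf_le (entSet_finite h).bddBelow ⟨α, hα, rfl⟩

lemma minEntropy_mem : ∃ α : ι → Bool, walsh h α ≠ 0 ∧
    minEntropy h = Real.logb 2 (1 / (walsh h α) ^ 2) :=
  (entSet_nonempty h).csInf_mem (entSet_finite h)

lemma maxSet_finite (i : ℕ) :
    {z : ℝ | ∃ w : ι → Bool, bwt w = i ∧ z = (walsh h w) ^ 2}.Finite := by
  apply Set.Finite.subset (Set.finite_range (fun w : ι → Bool => (walsh h w) ^ 2))
  rintro z ⟨w, _, rfl⟩; exact ⟨w, rfl⟩

lemma le_maxWsqAt (w : ι → Bool) : (walsh h w) ^ 2 ≤ maxWsqAt h (bwt w) :=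
  le_csSup (maxSet_finite h (bwt w)).bddAbove ⟨w, rfl, rfl⟩

lemma bwt_le (w : ι → Bool) : bwt w ≤ Fintype.card ι := by
  rw [bwt, ← Finset.card_univ]
  exact Finset.card_filter_le _ _

end Ent

lemma exists_bwt_eq {k i : ℕ} (hik : i ≤ k) : ∃ w : Fin k → Bool, bwt w = i := by
  refine ⟨fun j => decide ((j : ℕ) < i), ?_⟩
  rw [bwt]
  have h1 : (Finset.univ.filter fun j : Fin k => decide ((j : ℕ) < i) = true)
      = Finset.univ.filter fun j : Fin k => (j : ℕ) < i := by
    apply Finset.filter_congr; intro j _; simp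
  rw [h1]
  have h2 : (Finset.univ.filter fun j : Fin k => (j : ℕ) < i).card
      = (Finset.univ : Finset (Fin i)).card := by
    apply Finset.card_bij (fun (j : Fin k) hj => (⟨j, (Finset.mem_filter.mp hj).2⟩ : Fin i))
    · intros; exact Finset.mem_univ _
    · intro a ha b hb hab
      have := congrArg Fin.val hab
      simp only [] at this
      exact Fin.ext this
    · intro b _
      exact ⟨⟨b, lt_of_lt_of_le b.2 hik⟩, Finset.mem_filter.mpr ⟨Finset.mem_univ _, b.2⟩, rfl⟩
  rw [h2, Finset.card_univ, Fintype.card_fin]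

lemma maxWsqAt_mem {k : ℕ} (f : (Fin k → Bool) → Bool) {i : ℕ} (hik : i ≤ k) :
    ∃ w : Fin k → Bool, bwt w = i ∧ maxWsqAt f i = (walsh f w) ^ 2 := by
  obtain ⟨w, hw⟩ := exists_bwt_eq hik
  have hmem : maxWsqAt f i ∈ {z : ℝ | ∃ w : Fin k → Bool, bwt w = i ∧ z = (walsh f w) ^ 2} :=
    Set.Nonempty.csSup_mem ⟨(walsh f w) ^ 2, ⟨w, hw, rfl⟩⟩ (maxSet_finite f i)
  exact hmem

lemma logb_fact {k : ℕ} (W : ℝ) (u : Fin k → ℝ) (hW : W ≠ 0) (hu : ∀ i, u i ≠ 0) :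
    Real.logb 2 (1 / (W * ∏ i, u i) ^ 2)
      = -Real.logb 2 (W ^ 2) + ∑ i, -Real.logb 2 ((u i) ^ 2) := by
  rw [one_div, Real.logb_inv, mul_pow, ← Finset.prod_pow,
    Real.logb_mul (pow_ne_zero _ hW)
      (Finset.prod_ne_zero_iff.mpr fun i _ => pow_ne_zero _ (hu i)),
    Real.logb_prod _ _ (fun i _ => pow_ne_zero _ (hu i)), neg_add]
  congr 1
  rw [← Finset.sum_neg_distrib]

lemma sum_ite_bwt {ι : Type*} [Fintype ι] (w : ι → Bool) (c : ℝ) :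
    ∑ i, (if w i = true then c else 0) = (bwt w : ℝ) * c := by
  rw [Finset.sum_ite, Finset.sum_const, Finset.sum_const_zero, add_zero, bwt, nsmul_eq_mul]

/-- Min-entropy of the disjoint composition `f ⋄ g` for balanced `g`:
`H_∞(f ⋄ g) = min_{i ∈ {0,…,k}, a_i > 0} (−log₂ a_i + i·H_∞(g))`. -/
theorem stmt2 {k l : ℕ} (hk : 0 < k) (hl : 0 < l)
    (f : (Fin k → Bool) → Bool) (g : (Fin l → Bool) → Bool) (hg : balanced g) :
    minEntropy (disjComp f g) =
      sInf {y : ℝ | ∃ i : ℕ, i ≤ k ∧ 0 < maxWsqAt f i ∧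
        y = -Real.logb 2 (maxWsqAt f i) + (i : ℝ) * minEntropy g} := by
  classical
  have hAfin := entSet_finite (disjComp f g)
  have hAne := entSet_nonempty (disjComp f g)
  set B := {y : ℝ | ∃ i : ℕ, i ≤ k ∧ 0 < maxWsqAt f i ∧
    y = -Real.logb 2 (maxWsqAt f i) + (i : ℝ) * minEntropy g} with hB
  have hBfin : B.Finite := by
    apply Set.Finite.subset ((Set.finite_Iic k).image
      (fun i : ℕ => -Real.logb 2 (maxWsqAt f i) + (i : ℝ) * minEntropy g))
    rintro y ⟨i, hik, _, rfl⟩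
    exact ⟨i, hik, rfl⟩
  have fwd : ∀ y ∈ {y : ℝ | ∃ α : Fin k × Fin l → Bool, walsh (disjComp f g) α ≠ 0 ∧
      y = Real.logb 2 (1 / (walsh (disjComp f g) α) ^ 2)}, ∃ b ∈ B, b ≤ y := by
    rintro y ⟨α, hα, rfl⟩
    have hfac := walsh_disjComp hl f g hg α
    set w0 : Fin k → Bool := fun i => !decide ((fun j => α (i, j)) = fun _ => false) with hw0
    set u : Fin k → ℝ := fun i => if (fun j => α (i, j)) = (fun _ => false) then 1
        else walsh g (fun j => α (i, j)) with hu
    rw [hfac] at hα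
    have hW : walsh f w0 ≠ 0 := left_ne_zero_of_mul hα
    have hune : ∀ i, u i ≠ 0 := fun i =>
      Finset.prod_ne_zero_iff.mp (right_ne_zero_of_mul hα) i (Finset.mem_univ i)
    have hval : Real.logb 2 (1 / (walsh (disjComp f g) α) ^ 2)
        = -Real.logb 2 ((walsh f w0) ^ 2) + ∑ i, -Real.logb 2 ((u i) ^ 2) := by
      rw [hfac]; exact logb_fact _ _ hW hune
    refine ⟨-Real.logb 2 (maxWsqAt f (bwt w0)) + (bwt w0 : ℝ) * minEntropy g,
      ⟨bwt w0, by simpa using bwt_le w0, ?_, rfl⟩, ?_⟩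
    · exact lt_of_lt_of_le (pow_two_pos_of_ne_zero hW) (le_maxWsqAt f w0)
    · rw [hval]
      have h1 : -Real.logb 2 (maxWsqAt f (bwt w0)) ≤ -Real.logb 2 ((walsh f w0) ^ 2) :=
        neg_le_neg (Real.logb_le_logb_of_le one_lt_two
          (pow_two_pos_of_ne_zero hW) (le_maxWsqAt f w0))
      have h2 : (bwt w0 : ℝ) * minEntropy g ≤ ∑ i, -Real.logb 2 ((u i) ^ 2) := by
        rw [← sum_ite_bwt w0 (minEntropy g)]
        apply Finset.sum_le_sum
        intro i _
        by_cases hz : (fun j => α (i, j)) = (fun _ : Fin l => false)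
        · have hwi : w0 i = false := by simp [hw0, hz]
          have hui : u i = 1 := by simp [hu, hz]
          simp [hwi, hui]
        · have hwi : w0 i = true := by simp [hw0, hz]
          have hui : u i = walsh g (fun j => α (i, j)) := by simp [hu, hz]
          rw [hwi, if_pos rfl]
          have hgne : walsh g (fun j => α (i, j)) ≠ 0 := hui ▸ hune i
          have := minEntropy_le g (fun j => α (i, j)) hgne
          rw [one_div, Real.logb_inv] at this
          rw [hui]
          exact this
      exact add_le_add h1 h2
  have bwd : ∀ y ∈ B, ∃ a ∈ {y : ℝ | ∃ α : Fin k × Fin l → Bool,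
      walsh (disjComp f g) α ≠ 0 ∧
      y = Real.logb 2 (1 / (walsh (disjComp f g) α) ^ 2)}, a ≤ y := by
    rintro y ⟨i, hik, hpos, rfl⟩
    obtain ⟨w0, hbw, hval⟩ := maxWsqAt_mem f hik
    have hW : walsh f w0 ≠ 0 := by
      intro h0
      rw [hval, h0] at hpos
      simp at hpos
    obtain ⟨β0, hβne, hβval⟩ := minEntropy_mem g
    have hβ0 : β0 ≠ (fun _ : Fin l => false) := by
      intro h0
      rw [h0] at hβne
      exact hβne (walsh_zero_of_balanced g hg (by simpa using hl))
    set α : Fin k × Fin l → Bool := fun p => if w0 p.1 = true then β0 p.2 else false with hαdef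
    have hblk : ∀ i' : Fin k, (fun j => α (i', j))
        = (if w0 i' = true then β0 else (fun _ => false)) := by
      intro i'
      funext j
      by_cases h : w0 i' = true <;> simp [hαdef, h]
    have hwOf : (fun i' : Fin k => !decide ((fun j => α (i', j)) = fun _ => false)) = w0 := by
      funext i'
      rw [hblk i']
      by_cases h : w0 i' = true
      · rw [if_pos h, h]
        simp [hβ0]
      · rw [if_neg h]
        rw [Bool.not_eq_true] at h
        simp [h]
    have hfac := walsh_disjComp hl f g hg α
    rw [hwOf] at hfac
    have hufac : ∀ i' : Fin k, (if (fun j => α (i', j)) = (fun _ : Fin l => false) then 1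
        else walsh g (fun j => α (i', j))) = (if w0 i' = true then walsh g β0 else 1) := by
      intro i'
      rw [hblk i']
      by_cases h : w0 i' = true
      · rw [if_pos h, if_pos h, if_neg hβ0]
      · rw [if_neg h, if_neg h, if_pos rfl]
    rw [Finset.prod_congr rfl (fun i' _ => hufac i')] at hfac
    have humne : ∀ i' : Fin k, (if w0 i' = true then walsh g β0 else 1) ≠ 0 := by
      intro i'
      by_cases h : w0 i' = true <;> simp [h, hβne]
    have hαne : walsh (disjComp f g) α ≠ 0 := by
      rw [hfac]
      exact mul_ne_zero hW (Finset.prod_ne_zero_iff.mpr fun i' _ => humne i')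
    refine ⟨Real.logb 2 (1 / (walsh (disjComp f g) α) ^ 2), ⟨α, hαne, rfl⟩, le_of_eq ?_⟩
    rw [hfac, logb_fact _ _ hW humne]
    have hsum : (∑ i' : Fin k, -Real.logb 2 ((if w0 i' = true then walsh g β0 else 1) ^ 2))
        = (i : ℝ) * minEntropy g := by
      have hterm : ∀ i' : Fin k, -Real.logb 2 ((if w0 i' = true then walsh g β0 else 1) ^ 2)
          = (if w0 i' = true then -Real.logb 2 ((walsh g β0) ^ 2) else 0) := by
        intro i'
        by_cases h : w0 i' = true <;> simp [h]
      rw [Finset.sum_congr rfl (fun i' _ => hterm i'), sum_ite_bwt, hbw, hβval,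
        one_div, Real.logb_inv]
    rw [hsum, hval]
  have hBne : B.Nonempty := by
    obtain ⟨y, hy⟩ := hAne
    obtain ⟨b, hb, _⟩ := fwd y hy
    exact ⟨b, hb⟩
  rw [minEntropy]
  apply le_antisymm
  · obtain ⟨a, haA, ha⟩ := bwd _ (hBne.csInf_mem hBfin)
    exact le_trans (csInf_le hAfin.bddBelow haA) ha
  · obtain ⟨b, hbB, hb⟩ := fwd _ (hAne.csInf_mem hAfin)
    exact le_trans (csInf_le hBfin.bddBelow hbB) hb
end

section
/- Let g be a balanced l-variable Boolean function such that there exists β ∈ F_2^l with Hamming weight wt(β) = 1 and W_g(β)² = max_{v ∈ F_2^l} W_g(v)². Let f_0 = g and f_m = g ⋄ f_{m−1} for m ≥ 1. Then for every m ≥ 0, H_∞(f_m) = (m+1) · H_∞(g). -/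
open Finset

def sgn (b : Bool) : ℝ := if b then -1 else 1

lemma sgn_pow (b : Bool) : (-1 : ℝ) ^ (b2n b) = sgn b := by cases b <;> simp [b2n, sgn]

lemma sgn_mul (a b : Bool) : sgn a * sgn b = sgn (xor a b) := by
  cases a <;> cases b <;> norm_num [sgn]

lemma sgn_sq (a : Bool) : sgn a * sgn a = 1 := by cases a <;> norm_num [sgn]

noncomputable def chi {ι : Type*} [Fintype ι] (x α : ι → Bool) : ℝ :=
  ∏ i, sgn (x i && α i)

lemma chi_comm {ι : Type*} [Fintype ι] (x α : ι → Bool) : chi x α = chi α x := by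
  unfold chi; exact Finset.prod_congr rfl fun i _ => by rw [Bool.and_comm]

lemma walsh_eq {ι : Type*} [Fintype ι] [DecidableEq ι] (f : (ι → Bool) → Bool) (α : ι → Bool) :
    walsh f α = (2 ^ Fintype.card ι : ℝ)⁻¹ * ∑ x : ι → Bool, sgn (f x) * chi x α := by
  unfold walsh chi
  congr 1
  refine Finset.sum_congr rfl fun x _ => ?_
  rw [pow_add, sgn_pow, ← Finset.prod_pow_eq_pow_sum]
  congr 1
  exact Finset.prod_congr rfl fun i _ => sgn_pow _

lemma sum_pi_bool {ι : Type*} [Fintype ι] [DecidableEq ι]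
    (F : ι → Bool → ℝ) :
    ∑ x : ι → Bool, ∏ i, F i (x i) = ∏ i, (F i true + F i false) := by
  have h := Finset.prod_univ_sum (t := fun _ : ι => (univ : Finset Bool)) (f := fun i b => F i b)
  rw [Fintype.piFinset_univ] at h
  rw [← h]
  exact Finset.prod_congr rfl fun i _ => Fintype.sum_bool _

lemma ortho {ι : Type*} [Fintype ι] [DecidableEq ι] (α α' : ι → Bool) :
    ∑ x : ι → Bool, chi x α * chi x α' = if α = α' then (2 : ℝ) ^ Fintype.card ι else 0 := by
  have : ∀ x : ι → Bool, chi x α * chi x α' = ∏ i, (sgn (x i && α i) * sgn (x i && α' i)) := by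
    intro x; rw [chi, chi, ← Finset.prod_mul_distrib]
  simp only [this]
  rw [sum_pi_bool (fun i b => sgn (b && α i) * sgn (b && α' i))]
  by_cases h : α = α'
  · subst h
    simp only [if_pos rfl]
    have : ∀ i, sgn (true && α i) * sgn (true && α i) + sgn (false && α i) * sgn (false && α i) = 2 := by
      intro i; cases α i <;> norm_num [sgn]
    rw [Finset.prod_congr rfl fun i _ => this i, Finset.prod_const, Finset.card_univ]
    simp
  · rw [if_neg h]
    obtain ⟨i, hi⟩ : ∃ i, α i ≠ α' i := by
      by_contra hc; push_neg at hc; exact h (funext hc)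
    refine Finset.prod_eq_zero (Finset.mem_univ i) ?_
    revert hi; cases α i <;> cases α' i <;> norm_num [sgn]

lemma card_fun_bool {ι : Type*} [Fintype ι] [DecidableEq ι] :
    (Fintype.card (ι → Bool) : ℝ) = 2 ^ Fintype.card ι := by
  rw [Fintype.card_fun]; norm_num

lemma two_pow_ne {n : ℕ} : (2 : ℝ) ^ n ≠ 0 := by positivity

lemma inversion {ι : Type*} [Fintype ι] [DecidableEq ι] (f : (ι → Bool) → Bool) (y : ι → Bool) :
    ∑ α : ι → Bool, walsh f α * chi y α = sgn (f y) := by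
  have : ∀ α : ι → Bool, walsh f α * chi y α
      = (2 ^ Fintype.card ι : ℝ)⁻¹ * ∑ z : ι → Bool, sgn (f z) * (chi z α * chi y α) := by
    intro α
    rw [walsh_eq, mul_assoc, Finset.sum_mul]
    congr 1
    exact Finset.sum_congr rfl fun z _ => by ring
  simp only [this]
  rw [← Finset.mul_sum, Finset.sum_comm]
  have : ∀ z : ι → Bool, ∑ α : ι → Bool, sgn (f z) * (chi z α * chi y α)
      = sgn (f z) * (if z = y then (2 : ℝ) ^ Fintype.card ι else 0) := by
    intro z
    rw [← Finset.mul_sum]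
    congr 1
    calc ∑ α : ι → Bool, chi z α * chi y α = ∑ α : ι → Bool, chi α z * chi α y := by
          exact Finset.sum_congr rfl fun α _ => by rw [chi_comm z α, chi_comm y α]
      _ = _ := ortho z y
  simp only [this]
  simp only [mul_ite, mul_zero]
  rw [Finset.sum_ite_eq' univ y (fun z => sgn (f z) * 2 ^ Fintype.card ι)]
  simp only [Finset.mem_univ, if_pos]
  field_simp

lemma parseval {ι : Type*} [Fintype ι] [DecidableEq ι] (f : (ι → Bool) → Bool) :
    ∑ α : ι → Bool, (walsh f α) ^ 2 = 1 := by
  have h1 : ∀ α : ι → Bool, (walsh f α) ^ 2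
      = (2 ^ Fintype.card ι : ℝ)⁻¹ * ∑ x : ι → Bool, sgn (f x) * (walsh f α * chi x α) := by
    intro α
    rw [pow_two]
    nth_rewrite 1 [walsh_eq]
    rw [mul_assoc, Finset.sum_mul]
    congr 1
    exact Finset.sum_congr rfl fun x _ => by ring
  simp only [h1]
  rw [← Finset.mul_sum, Finset.sum_comm]
  have h2 : ∀ x : ι → Bool, ∑ α : ι → Bool, sgn (f x) * (walsh f α * chi x α) = 1 := by
    intro x
    rw [← Finset.mul_sum, inversion, sgn_sq]
  simp only [h2]
  rw [Finset.sum_const, Finset.card_univ, nsmul_eq_mul, card_fun_bool]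
  rw [mul_one, inv_mul_cancel₀ two_pow_ne]

def blockT {ι κ : Type*} [Fintype κ] (γ : ι × κ → Bool) (i : ι) : Bool :=
  !(decide (∀ j, γ (i, j) = false))

lemma sum_pi {ι : Type*} [Fintype ι] [DecidableEq ι] {σ : Type*} [Fintype σ] [DecidableEq σ]
    (F : ι → σ → ℝ) :
    ∑ x : ι → σ, ∏ i, F i (x i) = ∏ i, ∑ s, F i s := by
  have h := Finset.prod_univ_sum (t := fun _ : ι => (univ : Finset σ)) (f := fun i s => F i s)
  rw [Fintype.piFinset_univ] at h
  rw [← h]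

lemma chi_zero {κ : Type*} [Fintype κ] (w : κ → Bool) : chi w (fun _ => false) = 1 := by
  unfold chi; simp [sgn]

lemma sum_chi {κ : Type*} [Fintype κ] [DecidableEq κ] (v : κ → Bool) :
    ∑ w : κ → Bool, chi w v = if v = (fun _ => false) then (2 : ℝ) ^ Fintype.card κ else 0 := by
  rw [← ortho v (fun _ => false)]
  exact Finset.sum_congr rfl fun w _ => by rw [chi_zero, mul_one]

lemma sum_sgn_chi {κ : Type*} [Fintype κ] [DecidableEq κ] (h : (κ → Bool) → Bool) (v : κ → Bool) :
    ∑ w : κ → Bool, sgn (h w) * chi w v = (2 : ℝ) ^ Fintype.card κ * walsh h v := by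
  rw [walsh_eq, ← mul_assoc, mul_inv_cancel₀ two_pow_ne, one_mul]

lemma walsh_comp_step1 {ι κ : Type*} [Fintype ι] [DecidableEq ι] [Fintype κ] [DecidableEq κ]
    (g : (ι → Bool) → Bool) (h : (κ → Bool) → Bool) (γ : ι × κ → Bool) :
    walsh (disjComp g h) γ = (2 ^ Fintype.card (ι × κ) : ℝ)⁻¹ *
      ∑ u : ι → κ → Bool, sgn (g fun i => h (u i)) * ∏ i, chi (u i) (fun j => γ (i, j)) := by
  rw [walsh_eq]
  congr 1
  rw [← Equiv.sum_comp (Equiv.curry ι κ Bool)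
    (fun u => sgn (g fun i => h (u i)) * ∏ i, chi (u i) fun j => γ (i, j))]
  refine Finset.sum_congr rfl fun x _ => ?_
  have h2 : chi x γ = ∏ i, chi (Equiv.curry ι κ Bool x i) fun j => γ (i, j) := by
    unfold chi
    rw [Fintype.prod_prod_type]
    rfl
  rw [h2]
  rfl

lemma comp_walsh {ι κ : Type*} [Fintype ι] [DecidableEq ι] [Fintype κ] [DecidableEq κ]
    (g : (ι → Bool) → Bool) (h : (κ → Bool) → Bool)
    (hh : walsh h (fun _ => false) = 0) (γ : ι × κ → Bool) :
    walsh (disjComp g h) γ = walsh g (blockT γ) *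
      ∏ i, (if ∀ j, γ (i, j) = false then 1 else walsh h (fun j => γ (i, j))) := by
  have step2 : walsh (disjComp g h) γ = ∑ α : ι → Bool, walsh g α *
      ∏ i, (if α i then walsh h (fun j => γ (i, j))
            else (if (fun j => γ (i, j)) = (fun _ => false) then (1 : ℝ) else 0)) := by
    rw [walsh_comp_step1]
    have e1 : ∀ u : ι → κ → Bool, sgn (g fun i => h (u i)) * ∏ i, chi (u i) (fun j => γ (i, j))
        = ∑ α : ι → Bool, walsh g α *
            ∏ i, (sgn (h (u i) && α i) * chi (u i) (fun j => γ (i, j))) := by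
      intro u
      rw [← inversion g (fun i => h (u i)), Finset.sum_mul]
      refine Finset.sum_congr rfl fun α _ => ?_
      rw [mul_assoc]
      congr 1
      rw [chi, ← Finset.prod_mul_distrib]
    rw [Finset.sum_congr rfl fun u _ => e1 u, Finset.sum_comm]
    have e2 : ∀ α : ι → Bool,
        ∑ u : ι → κ → Bool, walsh g α *
            ∏ i, (sgn (h (u i) && α i) * chi (u i) (fun j => γ (i, j)))
        = walsh g α * ∏ i, ∑ w : κ → Bool, sgn (h w && α i) * chi w (fun j => γ (i, j)) := by
      intro α
      rw [← Finset.mul_sum, sum_pi (fun i w => sgn (h w && α i) * chi w (fun j => γ (i, j)))]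
    rw [Finset.sum_congr rfl fun α _ => e2 α]
    have e3 : ∀ (α : ι → Bool) (i : ι),
        ∑ w : κ → Bool, sgn (h w && α i) * chi w (fun j => γ (i, j))
        = (2 : ℝ) ^ Fintype.card κ *
          (if α i then walsh h (fun j => γ (i, j))
           else (if (fun j => γ (i, j)) = (fun _ => false) then (1 : ℝ) else 0)) := by
      intro α i
      cases hα : α i
      · simp only [Bool.and_false, Bool.false_eq_true, if_false]
        have : ∀ w : κ → Bool, sgn false * chi w (fun j => γ (i, j)) = chi w (fun j => γ (i, j)) := by
          intro w; simp [sgn]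
        rw [Finset.sum_congr rfl fun w _ => this w, sum_chi]
        split_ifs <;> ring
      · simp only [Bool.and_true, if_true]
        exact sum_sgn_chi h _
    have e4 : ∀ α : ι → Bool,
        walsh g α * ∏ i, ∑ w : κ → Bool, sgn (h w && α i) * chi w (fun j => γ (i, j))
        = (2 : ℝ) ^ Fintype.card (ι × κ) * (walsh g α *
            ∏ i, (if α i then walsh h (fun j => γ (i, j))
              else (if (fun j => γ (i, j)) = (fun _ => false) then (1 : ℝ) else 0))) := by
      intro α
      rw [Finset.prod_congr rfl fun i _ => e3 α i, Finset.prod_mul_distrib,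
        Finset.prod_const, Finset.card_univ, Fintype.card_prod,
        mul_comm (Fintype.card ι), pow_mul]
      ring
    rw [Finset.sum_congr rfl fun α _ => e4 α, ← Finset.mul_sum, ← mul_assoc,
      inv_mul_cancel₀ two_pow_ne, one_mul]
  rw [step2]
  have key : ∀ α : ι → Bool, walsh g α *
      ∏ i, (if α i then walsh h (fun j => γ (i, j))
            else (if (fun j => γ (i, j)) = (fun _ => false) then (1 : ℝ) else 0))
      = if α = blockT γ then walsh g (blockT γ) *
          ∏ i, (if ∀ j, γ (i, j) = false then 1 else walsh h (fun j => γ (i, j))) else 0 := by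
    intro α
    by_cases hα : α = blockT γ
    · subst hα
      rw [if_pos rfl]
      congr 1
      refine Finset.prod_congr rfl fun i _ => ?_
      by_cases hc : ∀ j, γ (i, j) = false
      · have hb : blockT γ i = false := by simp [blockT, hc]
        rw [hb, if_neg (by simp), if_pos (funext hc), if_pos hc]
      · have hb : blockT γ i = true := by simp [blockT, hc]
        rw [hb, if_pos rfl, if_neg hc]
    · rw [if_neg hα]
      obtain ⟨i, hi⟩ : ∃ i, α i ≠ blockT γ i := by
        by_contra hc; push_neg at hc; exact hα (funext hc)
      have hzero : (if α i then walsh h (fun j => γ (i, j))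
          else (if (fun j => γ (i, j)) = (fun _ => false) then (1 : ℝ) else 0)) = 0 := by
        by_cases hc : ∀ j, γ (i, j) = false
        · have hb : blockT γ i = false := by simp [blockT, hc]
          have hαi : α i = true := by
            cases hαi : α i
            · exact absurd (hαi.trans hb.symm) hi
            · rfl
          rw [hαi, if_pos rfl]
          have : (fun j => γ (i, j)) = (fun _ => false) := funext hc
          rw [this, hh]
        · have hb : blockT γ i = true := by simp [blockT, hc]
          have hαi : α i = false := by
            cases hαi : α i
            · rfl
            · exact absurd (hαi.trans hb.symm) hi
          rw [hαi, if_neg (by simp), if_neg (fun hf => hc (fun j => congrFun hf j))]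
      rw [Finset.prod_eq_zero (Finset.mem_univ i) hzero, mul_zero]
  rw [Finset.sum_congr rfl fun α _ => key α, Finset.sum_ite_eq' univ (blockT γ)]
  simp

lemma sgn_eq (b : Bool) : sgn b = 1 - 2 * (if b = true then (1 : ℝ) else 0) := by
  cases b <;> norm_num [sgn]

lemma balanced_walsh_zero {ι : Type*} [Fintype ι] [DecidableEq ι] (f : (ι → Bool) → Bool)
    (hcard : 0 < Fintype.card ι) (hf : balanced f) : walsh f (fun _ => false) = 0 := by
  rw [walsh_eq]
  have h1 : ∀ x : ι → Bool, sgn (f x) * chi x (fun _ => false)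
      = 1 - 2 * (if f x = true then (1 : ℝ) else 0) := fun x => by
    rw [chi_zero, mul_one, sgn_eq]
  rw [Finset.sum_congr rfl fun x _ => h1 x, Finset.sum_sub_distrib, ← Finset.mul_sum,
    Finset.sum_boole, Finset.sum_const, Finset.card_univ]
  rw [balanced] at hf
  rw [hf]
  have h2 : (Fintype.card (ι → Bool) : ℝ) = 2 * 2 ^ (Fintype.card ι - 1) := by
    rw [card_fun_bool]
    rw [← pow_succ']
    congr 1
    omega
  rw [nsmul_eq_mul, mul_one, h2]
  push_cast
  ring

lemma minEntropy_eq' {ι : Type*} [Fintype ι] [DecidableEq ι] (f : (ι → Bool) → Bool)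
    (αs : ι → Bool) (h1 : walsh f αs ≠ 0) (h2 : ∀ v, (walsh f v) ^ 2 ≤ (walsh f αs) ^ 2) :
    minEntropy f = Real.logb 2 (1 / (walsh f αs) ^ 2) := by
  refine IsLeast.csInf_eq ⟨⟨αs, h1, rfl⟩, ?_⟩
  rintro y ⟨α, hα, rfl⟩
  have hp : (0 : ℝ) < (walsh f α) ^ 2 := by positivity
  have := h2 α
  gcongr
  · norm_num

/-- Min-entropy of the O'Donnell–Tan recursion: if `g` is balanced and its maximal squared
Walsh coefficient is attained at some weight-one `β`, then `H_∞(f_m) = (m+1)·H_∞(g)`. -/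
theorem stmt3 {l : ℕ} (hl : 0 < l) (g : (Fin l → Bool) → Bool) (hg : balanced g)
    (β : Fin l → Bool) (hβ : bwt β = 1)
    (hmax : ∀ v : Fin l → Bool, (walsh g v) ^ 2 ≤ (walsh g β) ^ 2) :
    ∀ m : ℕ, minEntropy (OTfun g m) = (m + 1 : ℝ) * minEntropy g := by
  intro m
  set M := (walsh g β) ^ 2 with hM
  have hl' : 0 < Fintype.card (Fin l) := by simpa using hl
  have hg0 : walsh g (fun _ => false) = 0 := balanced_walsh_zero g hl' hg
  have hβ0 : walsh g β ≠ 0 := by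
    intro h0
    have hMz : M = 0 := by rw [hM, h0]; norm_num
    have hz : ∀ v : Fin l → Bool, (walsh g v) ^ 2 = 0 := fun v =>
      le_antisymm (hMz ▸ hmax v) (sq_nonneg _)
    have hp := parseval g
    rw [Finset.sum_congr rfl fun v _ => hz v, Finset.sum_const, smul_zero] at hp
    norm_num at hp
  have hM0 : 0 < M := lt_of_le_of_ne (sq_nonneg _) (Ne.symm (pow_ne_zero 2 hβ0))
  have hM1 : M ≤ 1 := by
    have h := Finset.single_le_sum (f := fun v : Fin l → Bool => (walsh g v) ^ 2)
      (fun v _ => sq_nonneg _) (Finset.mem_univ β)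
    rw [parseval g] at h
    exact hM ▸ h
  have key : ∀ m : ℕ, walsh (OTfun g m) (fun _ => false) = 0 ∧
      (∀ γ : OTIndex l m → Bool, (walsh (OTfun g m) γ) ^ 2 ≤ M ^ (m + 1)) ∧
      (∃ γ : OTIndex l m → Bool, (walsh (OTfun g m) γ) ^ 2 = M ^ (m + 1)) := by
    intro m
    induction m with
    | zero => exact ⟨hg0, fun γ => by rw [pow_one]; exact hmax γ, ⟨β, (pow_one M).symm⟩⟩
    | succ m ih =>
      obtain ⟨ih0, ihbd, γm, ihmax⟩ := ih
      have hcw : ∀ γ : Fin l × OTIndex l m → Bool,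
          walsh (OTfun g (m + 1)) γ = walsh g (blockT γ) *
            ∏ i, (if ∀ j, γ (i, j) = false then 1
                  else walsh (OTfun g m) (fun j => γ (i, j))) :=
        fun γ => comp_walsh g (OTfun g m) ih0 γ
      have hγm0 : γm ≠ (fun _ => false) := by
        intro hc
        rw [hc, ih0] at ihmax
        exact absurd ihmax.symm (ne_of_gt (by simpa using pow_pos hM0 (m + 1)))
      obtain ⟨j0, hj0⟩ : ∃ j, γm j = true := by
        by_contra hc
        push_neg at hc
        exact hγm0 (funext fun j => by simpa using hc j)
      refine ⟨?_, ?_, ?_⟩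
      · erw [hcw]
        have hT : blockT (fun _ : OTIndex l (m + 1) => false) = (fun _ : Fin l => false) := by
          funext i; simp [blockT]
        rw [hT, hg0, zero_mul]
      · intro γ
        erw [hcw, mul_pow]
        by_cases h0 : ∀ i, ∀ j : OTIndex l m, γ (i, j) = false
        · have hT : blockT γ = (fun _ : Fin l => false) := by
            funext i; simp [blockT, h0 i]
          rw [hT, hg0]
          have : (0 : ℝ) ≤ M ^ (m + 1 + 1) := le_of_lt (pow_pos hM0 _)
          simpa using this
        · push_neg at h0
          obtain ⟨i0, hi0⟩ := h0
          have h1 : (∏ i, (if ∀ j, γ (i, j) = false then (1 : ℝ)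
              else walsh (OTfun g m) (fun j => γ (i, j)))) ^ 2 ≤ M ^ (m + 1) := by
            rw [← Finset.prod_pow]
            calc ∏ i, (if ∀ j, γ (i, j) = false then (1 : ℝ)
                    else walsh (OTfun g m) (fun j => γ (i, j))) ^ 2
                ≤ ∏ i, (if i = i0 then M ^ (m + 1) else 1) := by
                  refine Finset.prod_le_prod (fun i _ => sq_nonneg _) (fun i _ => ?_)
                  by_cases hii : i = i0
                  · subst hii
                    rw [if_pos rfl, if_neg (by push_neg; exact hi0)]
                    exact ihbd _
                  · rw [if_neg hii]
                    by_cases hc : ∀ j, γ (i, j) = false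
                    · rw [if_pos hc]; norm_num
                    · rw [if_neg hc]
                      calc (walsh (OTfun g m) fun j => γ (i, j)) ^ 2 ≤ M ^ (m + 1) := ihbd _
                        _ ≤ 1 := pow_le_one₀ hM0.le hM1
              _ = M ^ (m + 1) := by
                  rw [Finset.prod_ite_eq' univ i0 (fun _ => M ^ (m + 1))]
                  simp
          calc (walsh g (blockT γ)) ^ 2 * (∏ i, (if ∀ j, γ (i, j) = false then (1 : ℝ)
                  else walsh (OTfun g m) (fun j => γ (i, j)))) ^ 2
              ≤ M * M ^ (m + 1) :=
                mul_le_mul (hmax _) h1 (sq_nonneg _) hM0.le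
            _ = M ^ (m + 1 + 1) := by ring
      · refine ⟨fun p : OTIndex l (m + 1) => β p.1 && γm p.2, ?_⟩
        erw [hcw]
        have hT : blockT (fun p : OTIndex l (m + 1) => β p.1 && γm p.2) = β := by
          funext i
          cases hb : β i
          · simp [blockT, hb]
          · have hnc : ¬ ∀ j : OTIndex l m, (β i && γm j) = false := by
              intro hc
              have := hc j0
              simp [hb, hj0] at this
            simp [blockT, hnc]
            exact ⟨hb, j0, hj0⟩
        rw [hT]
        have hP : (∏ i, (if ∀ j : OTIndex l m, (β (i, j).1 && γm (i, j).2) = false then (1 : ℝ)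
              else walsh (OTfun g m) fun j => β (i, j).1 && γm (i, j).2))
            = ∏ i, (if β i = true then walsh (OTfun g m) γm else 1) := by
          refine Finset.prod_congr rfl fun i _ => ?_
          cases hb : β i
          · simp [hb]
          · rw [if_pos rfl, if_neg ?_]
            · congr 1
              funext j
              simp [hb]
            · intro hc
              have := hc j0
              simp [hb, hj0] at this
        rw [hP, Finset.prod_ite, Finset.prod_const, Finset.prod_const_one, mul_one]
        have hc1 : (univ.filter fun i => β i = true).card = 1 := hβ
        rw [hc1, pow_one, mul_pow, ihmax]
        ring
  obtain ⟨k0, kbd, γm, kmax⟩ := key m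
  have hγne : walsh (OTfun g m) γm ≠ 0 := by
    intro hz
    rw [hz] at kmax
    exact absurd kmax.symm (ne_of_gt (by simpa using pow_pos hM0 (m + 1)))
  rw [minEntropy_eq' (OTfun g m) γm hγne (fun v => le_of_le_of_eq (kbd v) kmax.symm),
    minEntropy_eq' g β hβ0 hmax, kmax]
  rw [one_div, one_div, Real.logb_inv, Real.logb_inv, Real.logb_pow]
  push_cast
  ring
end

section
/- Let g be a balanced l-variable Boolean function such that there exists β ∈ F_2^l with Hamming weight wt(β) = 1 and W_g(β)² = max_{v ∈ F_2^l} W_g(v)². Let f_0 = g and f_m = g ⋄ f_{m−1} for m ≥ 1. Then for every m ≥ 0, H_∞(f_m)/Inf(f_m) = (H_∞(g)/Inf(g)) · ((m+1)/Inf(g)^m). -/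
open Finset

namespace OT


noncomputable def sgn (b : Bool) : ℝ := if b then -1 else 1

noncomputable def chi {ι : Type*} [Fintype ι] (α x : ι → Bool) : ℝ := ∏ i, sgn (x i && α i)

lemma neg_one_pow_b2n (b : Bool) : (-1 : ℝ) ^ (b2n b) = sgn b := by
  cases b <;> simp [b2n, sgn]

lemma sgn_sq (b : Bool) : sgn b * sgn b = 1 := by cases b <;> simp [sgn]

lemma chi_symm {ι : Type*} [Fintype ι] (α x : ι → Bool) : chi α x = chi x α := by
  unfold chi; exact Finset.prod_congr rfl fun i _ => by rw [Bool.and_comm]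

variable {ι : Type*} [Fintype ι] [DecidableEq ι]

lemma walsh_eq (f : (ι → Bool) → Bool) (α : ι → Bool) :
    walsh f α = (2 ^ Fintype.card ι : ℝ)⁻¹ * ∑ x : ι → Bool, sgn (f x) * chi α x := by
  unfold walsh chi
  congr 1
  refine Finset.sum_congr rfl fun x _ => ?_
  rw [pow_add, neg_one_pow_b2n, ← Finset.prod_pow_eq_pow_sum]
  congr 1
  exact Finset.prod_congr rfl fun i _ => neg_one_pow_b2n _

lemma sum_prod_bool {A : Type*} [Fintype A] (F : ι → A → ℝ) :
    ∑ x : ι → A, ∏ i, F i (x i) = ∏ i, ∑ a : A, F i a := by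
  rw [Finset.prod_univ_sum]
  rw [Fintype.piFinset_univ]

lemma sum_chi_mul_chi (α β : ι → Bool) :
    ∑ x : ι → Bool, chi α x * chi β x =
      if α = β then (2 : ℝ) ^ Fintype.card ι else 0 := by
  have h1 : ∀ x : ι → Bool, chi α x * chi β x =
      ∏ i, (sgn (x i && α i) * sgn (x i && β i)) := by
    intro x; rw [chi, chi, ← Finset.prod_mul_distrib]
  have h2 : ∑ x : ι → Bool, ∏ i, (sgn (x i && α i) * sgn (x i && β i))
      = ∏ i, ∑ b : Bool, (sgn (b && α i) * sgn (b && β i)) :=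
    sum_prod_bool (fun i b => sgn (b && α i) * sgn (b && β i))
  have h3 : ∀ i, (∑ b : Bool, (sgn (b && α i) * sgn (b && β i)))
      = if α i = β i then 2 else 0 := by
    intro i; cases hα : α i <;> cases hβ : β i <;> simp [sgn] <;> norm_num
  simp only [h1, h2, h3]
  by_cases h : α = β
  · subst h; simp [Finset.prod_const, Finset.card_univ]
  · obtain ⟨i, hi⟩ := Function.ne_iff.mp h
    rw [if_neg h]
    exact Finset.prod_eq_zero (Finset.mem_univ i) (by rw [if_neg hi])

lemma sum_chi (α : ι → Bool) :
    ∑ x : ι → Bool, chi α x = if α = (fun _ => false) then (2 : ℝ) ^ Fintype.card ι else 0 := by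
  have := sum_chi_mul_chi α (fun _ => false)
  simpa [chi, sgn] using this

lemma inversion (f : (ι → Bool) → Bool) (x : ι → Bool) :
    ∑ α : ι → Bool, walsh f α * chi α x = sgn (f x) := by
  have h2 : (0:ℝ) < 2 ^ Fintype.card ι := by positivity
  simp only [walsh_eq, Finset.sum_mul, mul_assoc, ← Finset.mul_sum]
  rw [Finset.sum_comm]
  have : ∀ y : ι → Bool, ∑ α : ι → Bool, sgn (f y) * chi α y * chi α x
      = sgn (f y) * ∑ α : ι → Bool, chi y α * chi x α := by
    intro y
    rw [Finset.mul_sum]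
    exact Finset.sum_congr rfl fun α _ => by rw [mul_assoc, chi_symm α y, chi_symm α x]
  simp only [mul_assoc] at this ⊢
  calc (2 ^ Fintype.card ι : ℝ)⁻¹ * ∑ y : ι → Bool, ∑ α : ι → Bool, sgn (f y) * (chi α y * chi α x)
      = (2 ^ Fintype.card ι : ℝ)⁻¹ * ∑ y : ι → Bool, sgn (f y) *
          ∑ α : ι → Bool, chi y α * chi x α := by
        congr 1; refine Finset.sum_congr rfl fun y _ => ?_
        rw [Finset.mul_sum]
        exact Finset.sum_congr rfl fun α _ => by rw [chi_symm α y, chi_symm α x]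
    _ = sgn (f x) := by
        simp only [sum_chi_mul_chi]
        rw [Finset.sum_eq_single x]
        · rw [if_pos rfl]; field_simp
        · intro y _ hy; rw [if_neg hy, mul_zero]
        · intro h; exact absurd (Finset.mem_univ x) h

lemma parseval (f : (ι → Bool) → Bool) :
    ∑ α : ι → Bool, walsh f α ^ 2 = 1 := by
  have key : ∀ α : ι → Bool, walsh f α ^ 2 =
      (2 ^ Fintype.card ι : ℝ)⁻¹ * (walsh f α * ∑ x : ι → Bool, sgn (f x) * chi α x) := by
    intro α; rw [pow_two]; nth_rewrite 2 [walsh_eq]; ring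
  calc ∑ α : ι → Bool, walsh f α ^ 2
      = (2 ^ Fintype.card ι : ℝ)⁻¹ *
          ∑ α : ι → Bool, (walsh f α * ∑ x : ι → Bool, sgn (f x) * chi α x) := by
        rw [Finset.mul_sum]; exact Finset.sum_congr rfl fun α _ => key α
    _ = (2 ^ Fintype.card ι : ℝ)⁻¹ *
          ∑ x : ι → Bool, sgn (f x) * ∑ α : ι → Bool, walsh f α * chi α x := by
        congr 1
        calc ∑ α : ι → Bool, (walsh f α * ∑ x : ι → Bool, sgn (f x) * chi α x)
            = ∑ α : ι → Bool, ∑ x : ι → Bool, sgn (f x) * (walsh f α * chi α x) := by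
              refine Finset.sum_congr rfl fun α _ => ?_
              rw [Finset.mul_sum]; exact Finset.sum_congr rfl fun x _ => by ring
          _ = ∑ x : ι → Bool, ∑ α : ι → Bool, sgn (f x) * (walsh f α * chi α x) :=
              Finset.sum_comm
          _ = ∑ x : ι → Bool, sgn (f x) * ∑ α : ι → Bool, walsh f α * chi α x :=
              Finset.sum_congr rfl fun x _ => (Finset.mul_sum _ _ _).symm
    _ = 1 := by
        simp only [inversion, sgn_sq]
        simp [Fintype.card_fun]





lemma balanced_walsh_zero (f : (ι → Bool) → Bool) (hf : balanced f) (hc : 0 < Fintype.card ι) :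
    walsh f (fun _ => false) = 0 := by
  rw [walsh_eq]
  have hchi : ∀ x : ι → Bool, chi (fun _ => false) x = 1 := by
    intro x; unfold chi; simp [sgn]
  have this1 : ∑ x : ι → Bool, sgn (f x) * chi (fun _ => false) x
      = ∑ x : ι → Bool, (1 - 2 * (if f x = true then (1:ℝ) else 0)) := by
    refine Finset.sum_congr rfl fun x _ => ?_
    rw [hchi]; cases h : f x <;> simp [sgn, h] <;> norm_num
  rw [this1, Finset.sum_sub_distrib, ← Finset.mul_sum, Finset.sum_boole, hf]
  simp only [Finset.sum_const, nsmul_eq_mul, mul_one, Finset.card_univ,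
    Fintype.card_fun, Fintype.card_bool]
  have hn : Fintype.card ι = (Fintype.card ι - 1) + 1 := by omega
  rw [hn, pow_succ]
  push_cast
  ring

/-- flip lemma -/
lemma chi_flip (β x : ι → Bool) (i : ι) :
    chi β (Function.update x i (!x i)) = (if β i then -1 else 1) * chi β x := by
  unfold chi
  rw [← Finset.mul_prod_erase univ _ (Finset.mem_univ i),
      ← Finset.mul_prod_erase univ (fun j => sgn (x j && β j)) (Finset.mem_univ i)]
  have herase : ∏ j ∈ univ.erase i, sgn (Function.update x i (!x i) j && β j)
      = ∏ j ∈ univ.erase i, sgn (x j && β j) := by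
    refine Finset.prod_congr rfl fun j hj => ?_
    rw [Function.update_of_ne (Finset.ne_of_mem_erase hj)]
  rw [herase, Function.update_self, ← mul_assoc]
  congr 1
  cases hβ : β i <;> cases hx : x i <;> simp [sgn]

lemma influence_eq (f : (ι → Bool) → Bool) :
    influence f = ∑ α : ι → Bool, (bwt α : ℝ) * walsh f α ^ 2 := by
  have hN : (0:ℝ) < 2 ^ Fintype.card ι := by positivity
  have key : ∀ i : ι,
      ((Finset.univ.filter fun x : ι → Bool =>
        f x ≠ f (Function.update x i (!x i))).card : ℝ)
      = ∑ x : ι → Bool, (1 - sgn (f x) * sgn (f (Function.update x i (!x i)))) / 2 := by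
    intro i
    rw [← Finset.sum_filter_add_sum_filter_not univ
      (fun x : ι → Bool => f x ≠ f (Function.update x i (!x i)))
      (fun x => (1 - sgn (f x) * sgn (f (Function.update x i (!x i)))) / 2)]
    have e1 : ∀ x ∈ univ.filter (fun x : ι → Bool => f x ≠ f (Function.update x i (!x i))),
        (1 - sgn (f x) * sgn (f (Function.update x i (!x i)))) / 2 = 1 := by
      intro x hx
      have := (Finset.mem_filter.mp hx).2
      cases h1 : f x <;> cases h2 : f (Function.update x i (!x i)) <;>
        simp [h1, h2, sgn] at this ⊢ <;> norm_num
    have e2 : ∀ x ∈ univ.filter (fun x : ι → Bool => ¬ f x ≠ f (Function.update x i (!x i))),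
        (1 - sgn (f x) * sgn (f (Function.update x i (!x i)))) / 2 = 0 := by
      intro x hx
      have := (Finset.mem_filter.mp hx).2
      cases h1 : f x <;> cases h2 : f (Function.update x i (!x i)) <;>
        simp [h1, h2, sgn] at this ⊢
    rw [Finset.sum_congr rfl e1, Finset.sum_congr rfl e2]
    simp
  have cross : ∀ i : ι, ∑ x : ι → Bool, sgn (f x) * sgn (f (Function.update x i (!x i)))
      = 2 ^ Fintype.card ι * ∑ α : ι → Bool, walsh f α ^ 2 * (if α i then -1 else 1) := by
    intro i
    have expand : ∀ x : ι → Bool, sgn (f x) * sgn (f (Function.update x i (!x i)))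
        = ∑ α : ι → Bool, ∑ β : ι → Bool,
            walsh f α * walsh f β * ((if β i then -1 else 1) * (chi α x * chi β x)) := by
      intro x
      rw [← inversion f x, ← inversion f (Function.update x i (!x i)), Finset.sum_mul]
      refine Finset.sum_congr rfl fun α _ => ?_
      rw [Finset.mul_sum]
      refine Finset.sum_congr rfl fun β _ => ?_
      rw [chi_flip]
      ring
    calc ∑ x : ι → Bool, sgn (f x) * sgn (f (Function.update x i (!x i)))
        = ∑ x : ι → Bool, ∑ α : ι → Bool, ∑ β : ι → Bool,
            walsh f α * walsh f β * ((if β i then -1 else 1) * (chi α x * chi β x)) :=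
          Finset.sum_congr rfl fun x _ => expand x
      _ = ∑ α : ι → Bool, ∑ x : ι → Bool, ∑ β : ι → Bool,
            walsh f α * walsh f β * ((if β i then -1 else 1) * (chi α x * chi β x)) :=
          Finset.sum_comm
      _ = ∑ α : ι → Bool, ∑ β : ι → Bool, ∑ x : ι → Bool,
            walsh f α * walsh f β * ((if β i then -1 else 1) * (chi α x * chi β x)) :=
          Finset.sum_congr rfl fun α _ => Finset.sum_comm
      _ = ∑ α : ι → Bool, ∑ β : ι → Bool,
            walsh f α * walsh f β * ((if β i then -1 else 1) *
              ∑ x : ι → Bool, chi α x * chi β x) := by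
          refine Finset.sum_congr rfl fun α _ => Finset.sum_congr rfl fun β _ => ?_
          rw [Finset.mul_sum, Finset.mul_sum]
      _ = 2 ^ Fintype.card ι * ∑ α : ι → Bool, walsh f α ^ 2 * (if α i then -1 else 1) := by
          simp only [sum_chi_mul_chi]
          rw [Finset.mul_sum]
          refine Finset.sum_congr rfl fun α _ => ?_
          rw [Finset.sum_eq_single α]
          · rw [if_pos rfl]; ring
          · intro β _ hβ; rw [if_neg (Ne.symm hβ)]; ring
          · intro h; exact absurd (Finset.mem_univ α) h
  unfold influence
  have step : ∀ i : ι, ((Finset.univ.filter fun x : ι → Bool =>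
        f x ≠ f (Function.update x i (!x i))).card : ℝ) / 2 ^ Fintype.card ι
      = ∑ α : ι → Bool, walsh f α ^ 2 * (if α i then (1:ℝ) else 0) := by
    intro i
    rw [key i, ← Finset.sum_div, Finset.sum_sub_distrib, cross i]
    have hone : ∑ _x : ι → Bool, (1:ℝ) = 2 ^ Fintype.card ι := by
      simp [Fintype.card_fun]
    rw [hone]
    have per : ∀ α : ι → Bool, walsh f α ^ 2 * (if α i then (-1:ℝ) else 1)
        = walsh f α ^ 2 - 2 * (walsh f α ^ 2 * (if α i then (1:ℝ) else 0)) := by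
      intro α; by_cases h : α i = true <;> simp [h] <;> ring
    rw [Finset.sum_congr rfl fun α _ => per α, Finset.sum_sub_distrib, parseval f,
      ← Finset.mul_sum]
    field_simp
    ring
  rw [Finset.sum_congr rfl fun i _ => step i, Finset.sum_comm]
  refine Finset.sum_congr rfl fun α _ => ?_
  rw [← Finset.mul_sum, Finset.sum_boole]
  rw [mul_comm]
  rfl



/-- maximal squared Walsh coefficient -/
noncomputable def Wmax (f : (ι → Bool) → Bool) : ℝ :=
  (Finset.univ.image fun α : ι → Bool => walsh f α ^ 2).max'
    (Finset.univ_nonempty.image _)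

lemma le_Wmax (f : (ι → Bool) → Bool) (α : ι → Bool) : walsh f α ^ 2 ≤ Wmax f := by
  exact Finset.le_max' (Finset.univ.image fun β : ι → Bool => walsh f β ^ 2)
    (walsh f α ^ 2) (Finset.mem_image_of_mem _ (Finset.mem_univ α))

lemma exists_Wmax (f : (ι → Bool) → Bool) : ∃ α : ι → Bool, walsh f α ^ 2 = Wmax f := by
  have := Finset.max'_mem (Finset.univ.image fun α : ι → Bool => walsh f α ^ 2)
    (Finset.univ_nonempty.image _)
  obtain ⟨y, _, hy2⟩ := Finset.mem_image.mp this
  exact ⟨y, hy2⟩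

lemma Wmax_pos (f : (ι → Bool) → Bool) : 0 < Wmax f := by
  by_contra h
  push_neg at h
  have : ∑ α : ι → Bool, walsh f α ^ 2 ≤ 0 := by
    have : ∀ α : ι → Bool, walsh f α ^ 2 ≤ 0 := fun α => le_trans (le_Wmax f α) h
    exact Finset.sum_nonpos fun α _ => this α
  rw [parseval f] at this
  linarith

lemma Wmax_le_one (f : (ι → Bool) → Bool) : Wmax f ≤ 1 := by
  obtain ⟨α, hα⟩ := exists_Wmax f
  rw [← hα]
  calc walsh f α ^ 2 ≤ ∑ β : ι → Bool, walsh f β ^ 2 :=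
        Finset.single_le_sum (fun β _ => sq_nonneg (walsh f β)) (Finset.mem_univ α)
    _ = 1 := parseval f

lemma walsh_sq_le_one (f : (ι → Bool) → Bool) (α : ι → Bool) : walsh f α ^ 2 ≤ 1 :=
  le_trans (le_Wmax f α) (Wmax_le_one f)

lemma minEntropy_eq (f : (ι → Bool) → Bool) :
    minEntropy f = Real.logb 2 (1 / Wmax f) := by
  have hpos := Wmax_pos f
  obtain ⟨α₀, hα₀⟩ := exists_Wmax f
  have hα₀ne : walsh f α₀ ≠ 0 := by
    intro h; rw [h] at hα₀; simp at hα₀; rw [← hα₀] at hpos; linarith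
  set S := {y : ℝ | ∃ α : ι → Bool, walsh f α ≠ 0 ∧ y = Real.logb 2 (1 / (walsh f α) ^ 2)}
  have hfin : S.Finite := by
    apply Set.Finite.subset (Set.finite_range fun α : ι → Bool =>
      Real.logb 2 (1 / (walsh f α) ^ 2))
    rintro y ⟨α, _, rfl⟩
    exact ⟨α, rfl⟩
  have hmem : Real.logb 2 (1 / Wmax f) ∈ S := ⟨α₀, hα₀ne, by rw [hα₀]⟩
  apply le_antisymm
  · exact csInf_le hfin.bddBelow hmem
  · apply le_csInf ⟨_, hmem⟩
    rintro y ⟨α, hα, rfl⟩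
    have h1 : (0:ℝ) < walsh f α ^ 2 := by positivity
    exact Real.logb_le_logb_of_le (by norm_num : (1:ℝ) < 2) (by positivity)
      (one_div_le_one_div_of_le h1 (le_Wmax f α))


variable {ι : Type*} [Fintype ι] [DecidableEq ι]

variable {ι κ : Type*} [Fintype ι] [DecidableEq ι] [Fintype κ] [DecidableEq κ]

/-- block of a vector -/
def blk (α : ι × κ → Bool) (i : ι) : κ → Bool := fun j => α (i, j)

/-- outer pattern -/
def gam (α : ι × κ → Bool) : ι → Bool := fun i =>
  if blk α i = (fun _ => false) then false else true

lemma walsh_disjComp_full (g : (ι → Bool) → Bool) (h : (κ → Bool) → Bool) (α : ι × κ → Bool) :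
    walsh (disjComp g h) α = ∑ γ : ι → Bool, walsh g γ *
      ∏ i, (if γ i then walsh h (blk α i)
            else (if blk α i = (fun _ => false) then 1 else 0)) := by
  have hcard : (2 : ℝ) ^ Fintype.card (ι × κ)
      = ((2 : ℝ) ^ Fintype.card κ) ^ Fintype.card ι := by
    rw [← pow_mul, Fintype.card_prod]; ring_nf
  have hκpos : (0:ℝ) < 2 ^ Fintype.card κ := by positivity
  rw [walsh_eq]
  -- rewrite the summand
  have summand : ∀ x : ι × κ → Bool,
      sgn (disjComp g h x) * chi α x
      = ∑ γ : ι → Bool, walsh g γ *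
          ∏ i, ((if γ i then sgn (h (blk x i)) else 1) * chi (blk α i) (blk x i)) := by
    intro x
    have hchiα : chi α x = ∏ i, chi (blk α i) (blk x i) := by
      unfold chi
      rw [Fintype.prod_prod_type]
      rfl
    have hsgn : sgn (disjComp g h x)
        = ∑ γ : ι → Bool, walsh g γ * ∏ i, (if γ i then sgn (h (blk x i)) else 1) := by
      rw [show disjComp g h x = g (fun i => h (blk x i)) from rfl,
        ← inversion g (fun i => h (blk x i))]
      refine Finset.sum_congr rfl fun γ _ => ?_
      congr 1
      unfold chi
      refine Finset.prod_congr rfl fun i _ => ?_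
      cases hγ : γ i <;> simp [sgn, hγ]
    rw [hsgn, hchiα, Finset.sum_mul]
    refine Finset.sum_congr rfl fun γ _ => ?_
    rw [mul_assoc, ← Finset.prod_mul_distrib]
  rw [Finset.sum_congr rfl fun x _ => summand x, Finset.sum_comm]
  -- reindex the inner sum over x by currying
  have reindex : ∀ γ : ι → Bool,
      ∑ x : ι × κ → Bool, walsh g γ *
        ∏ i, ((if γ i then sgn (h (blk x i)) else 1) * chi (blk α i) (blk x i))
      = walsh g γ * ∑ a : ι → κ → Bool,
          ∏ i, ((if γ i then sgn (h (a i)) else 1) * chi (blk α i) (a i)) := by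
    intro γ
    rw [← Finset.mul_sum]
    congr 1
    exact Fintype.sum_equiv (Equiv.curry ι κ Bool) _ _ (fun x => rfl)
  rw [Finset.sum_congr rfl fun γ _ => reindex γ]
  -- factor each inner sum
  have inner : ∀ γ : ι → Bool,
      ∑ a : ι → κ → Bool, ∏ i, ((if γ i then sgn (h (a i)) else 1) * chi (blk α i) (a i))
      = ((2:ℝ) ^ Fintype.card κ) ^ Fintype.card ι *
          ∏ i, (if γ i then walsh h (blk α i)
                else (if blk α i = (fun _ => false) then 1 else 0)) := by
    intro γ
    rw [sum_prod_bool (fun i b => (if γ i then sgn (h b) else 1) * chi (blk α i) b)]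
    rw [show ((2:ℝ) ^ Fintype.card κ) ^ Fintype.card ι *
          ∏ i, (if γ i then walsh h (blk α i)
                else (if blk α i = (fun _ => false) then 1 else 0))
        = ∏ i, ((2:ℝ) ^ Fintype.card κ) * (if γ i then walsh h (blk α i)
                else (if blk α i = (fun _ => false) then 1 else 0)) by
      rw [Finset.prod_mul_distrib, Finset.prod_const, Finset.card_univ]]
    refine Finset.prod_congr rfl fun i _ => ?_
    cases hγ : γ i
    · simp only [Bool.false_eq_true, if_false, one_mul]
      rw [sum_chi (blk α i)]
      by_cases hb : blk α i = (fun _ => false) <;> simp [hb]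
    · simp only [if_true]
      have := walsh_eq h (blk α i)
      have : ∑ b : κ → Bool, sgn (h b) * chi (blk α i) b
          = 2 ^ Fintype.card κ * walsh h (blk α i) := by
        rw [this]; field_simp
      rw [this]
  rw [Finset.sum_congr rfl fun γ _ => by rw [inner γ]]
  rw [Finset.mul_sum]
  refine Finset.sum_congr rfl fun γ _ => ?_
  rw [hcard]
  have hC : ((2:ℝ) ^ Fintype.card κ) ^ Fintype.card ι ≠ 0 := by positivity
  field_simp


lemma walsh_disjComp (g : (ι → Bool) → Bool) (h : (κ → Bool) → Bool)
    (hh0 : walsh h (fun _ => false) = 0) (α : ι × κ → Bool) :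
    walsh (disjComp g h) α = walsh g (gam α) *
      ∏ i, (if blk α i = (fun _ => false) then 1 else walsh h (blk α i)) := by
  rw [walsh_disjComp_full]
  rw [Finset.sum_eq_single (gam α)]
  · congr 1
    refine Finset.prod_congr rfl fun i _ => ?_
    unfold gam
    by_cases hb : blk α i = (fun _ => false)
    · simp [hb]
    · simp [hb]
  · intro γ _ hγ
    obtain ⟨i, hi⟩ := Function.ne_iff.mp hγ
    unfold gam at hi
    by_cases hb : blk α i = (fun _ => false)
    · rw [if_pos hb] at hi
      have hγi : γ i = true := by revert hi; cases γ i <;> simp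
      apply mul_eq_zero_of_right
      apply Finset.prod_eq_zero (Finset.mem_univ i)
      rw [hγi, if_pos rfl, hb, hh0]
    · rw [if_neg hb] at hi
      have hγi : γ i = false := by revert hi; cases γ i <;> simp
      apply mul_eq_zero_of_right
      apply Finset.prod_eq_zero (Finset.mem_univ i)
      rw [hγi]
      simp [hb]
  · intro hmem; exact absurd (Finset.mem_univ _) hmem

lemma bwt_blocks (α : ι × κ → Bool) : bwt α = ∑ i, bwt (blk α i) := by
  unfold bwt
  rw [Finset.card_filter, Fintype.sum_prod_type]
  refine Finset.sum_congr rfl fun i _ => ?_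
  rw [Finset.card_filter]
  rfl

set_option maxHeartbeats 1000000 in
lemma influence_disjComp (g : (ι → Bool) → Bool) (h : (κ → Bool) → Bool)
    (hh0 : walsh h (fun _ => false) = 0) :
    influence (disjComp g h) = influence g * influence h := by
  classical
  obtain ⟨s, hs⟩ : ∃ s : Bool → (κ → Bool) → ℝ, s = fun c b =>
      if c then walsh h b ^ 2 else (if b = (fun _ => false) then 1 else 0) := ⟨_, rfl⟩
  have sum_s : ∀ c, ∑ b : κ → Bool, s c b = 1 := by
    intro c; cases c
    · simp only [hs, Bool.false_eq_true, if_false]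
      rw [Finset.sum_ite_eq' univ (fun _ => false) (fun _ => (1:ℝ))]
      simp
    · simp only [hs, if_true]
      exact parseval h
  have sum_bs : ∀ c, ∑ b : κ → Bool, (bwt b : ℝ) * s c b
      = if c then influence h else 0 := by
    intro c; cases c
    · simp only [hs, Bool.false_eq_true, if_false]
      have : ∀ b : κ → Bool, (bwt b : ℝ) * (if b = (fun _ => false) then 1 else 0)
          = if b = (fun _ => false) then (bwt b : ℝ) else 0 := by
        intro b; by_cases hb : b = (fun _ => false) <;> simp [hb]
      rw [Finset.sum_congr rfl fun b _ => this b,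
        Finset.sum_ite_eq' univ (fun _ => false) (fun b => (bwt b : ℝ))]
      simp [bwt]
    · simp only [hs, if_true]
      rw [← influence_eq h]
  have rev : ∀ a : ι → κ → Bool,
      (walsh g (fun i => if a i = (fun _ => false) then false else true)) ^ 2 *
        ∏ i, (if a i = (fun _ => false) then 1 else walsh h (a i)) ^ 2
      = ∑ γ : ι → Bool, walsh g γ ^ 2 * ∏ i, s (γ i) (a i) := by
    intro a
    rw [Finset.sum_eq_single (fun i => if a i = (fun _ => false) then false else true)]
    · congr 1
      refine Finset.prod_congr rfl fun i _ => ?_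
      by_cases hb : a i = (fun _ => false) <;> simp [hb, hs]
    · intro γ _ hγ
      obtain ⟨i, hi⟩ := Function.ne_iff.mp hγ
      by_cases hb : a i = (fun _ => false)
      · rw [if_pos hb] at hi
        have hγi : γ i = true := by revert hi; cases γ i <;> simp
        apply mul_eq_zero_of_right
        apply Finset.prod_eq_zero (Finset.mem_univ i)
        rw [hγi]
        simp [hs, hb, hh0]
      · rw [if_neg hb] at hi
        have hγi : γ i = false := by revert hi; cases γ i <;> simp
        apply mul_eq_zero_of_right
        apply Finset.prod_eq_zero (Finset.mem_univ i)
        rw [hγi]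
        simp [hs, hb]
    · intro hmem; exact absurd (Finset.mem_univ _) hmem
  rw [influence_eq (disjComp g h)]
  have reindex := Fintype.sum_equiv (Equiv.curry ι κ Bool)
    (fun α : ι × κ → Bool => (bwt α : ℝ) * walsh (disjComp g h) α ^ 2)
    (fun a : ι → κ → Bool => (∑ i, (bwt (a i) : ℝ)) *
       ∑ γ : ι → Bool, walsh g γ ^ 2 * ∏ i, s (γ i) (a i)) ?_
  · rw [reindex]
    have step1 : ∀ a : ι → κ → Bool,
        (∑ i, (bwt (a i) : ℝ)) * ∑ γ : ι → Bool, walsh g γ ^ 2 * ∏ i, s (γ i) (a i)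
        = ∑ γ : ι → Bool, ∑ i : ι, walsh g γ ^ 2 *
            ((bwt (a i) : ℝ) * ∏ i', s (γ i') (a i')) := by
      intro a
      rw [Finset.sum_mul_sum, Finset.sum_comm]
      exact Finset.sum_congr rfl fun γ _ => Finset.sum_congr rfl fun i _ => by ring
    rw [Finset.sum_congr rfl fun a _ => step1 a, Finset.sum_comm]
    rw [Finset.sum_congr rfl fun γ _ => Finset.sum_comm]
    have step2 : ∀ γ : ι → Bool, ∀ i : ι,
        ∑ a : ι → κ → Bool, walsh g γ ^ 2 * ((bwt (a i) : ℝ) * ∏ i', s (γ i') (a i'))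
        = walsh g γ ^ 2 * (if γ i then influence h else 0) := by
      intro γ i
      rw [← Finset.mul_sum]
      congr 1
      calc ∑ a : ι → κ → Bool, (bwt (a i) : ℝ) * ∏ i', s (γ i') (a i')
          = ∑ a : ι → κ → Bool,
              ∏ i', ((if i' = i then (bwt (a i') : ℝ) else 1) * s (γ i') (a i')) := by
            refine Finset.sum_congr rfl fun a _ => ?_
            rw [Finset.prod_mul_distrib,
              Finset.prod_ite_eq' univ i (fun i' => (bwt (a i') : ℝ))]
            simp
        _ = ∏ i', ∑ b : κ → Bool, ((if i' = i then (bwt b : ℝ) else 1) * s (γ i') b) :=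
            sum_prod_bool (fun i' b => (if i' = i then (bwt b : ℝ) else 1) * s (γ i') b)
        _ = ∏ i', (if i' = i then (if γ i then influence h else 0) else 1) := by
            refine Finset.prod_congr rfl fun i' _ => ?_
            by_cases hi' : i' = i
            · subst hi'
              simp only [if_pos rfl]
              exact sum_bs (γ i')
            · simp only [if_neg hi', one_mul]
              rw [sum_s (γ i')]
        _ = if γ i then influence h else 0 := by
            rw [Finset.prod_ite_eq' univ i (fun _ => if γ i then influence h else 0)]
            simp
    rw [Finset.sum_congr rfl fun γ _ =>
      Finset.sum_congr rfl fun i _ => step2 γ i]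
    have step3 : ∀ γ : ι → Bool,
        ∑ i : ι, walsh g γ ^ 2 * (if γ i then influence h else 0)
        = (bwt γ : ℝ) * walsh g γ ^ 2 * influence h := by
      intro γ
      rw [← Finset.mul_sum]
      have e : ∀ i : ι, (if γ i then influence h else 0)
          = influence h * (if γ i = true then (1:ℝ) else 0) := by
        intro i; by_cases hi : γ i = true <;> simp [hi]
      rw [Finset.sum_congr rfl fun i _ => e i, ← Finset.mul_sum, Finset.sum_boole]
      show walsh g γ ^ 2 * (influence h *
        ((Finset.univ.filter fun i => γ i = true).card : ℝ)) = _
      unfold bwt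
      ring
    rw [Finset.sum_congr rfl fun γ _ => step3 γ, ← Finset.sum_mul, ← influence_eq g]
  · intro α
    show (bwt α : ℝ) * walsh (disjComp g h) α ^ 2
      = (∑ i, (bwt (blk α i) : ℝ)) *
        ∑ γ : ι → Bool, walsh g γ ^ 2 * ∏ i, s (γ i) (blk α i)
    rw [← rev (blk α), walsh_disjComp g h hh0 α, mul_pow, ← Finset.prod_pow,
      bwt_blocks α]
    unfold gam
    push_cast
    ring


variable {ι κ : Type*} [Fintype ι] [DecidableEq ι] [Fintype κ] [DecidableEq κ]

lemma Wmax_disjComp (g : (ι → Bool) → Bool) (h : (κ → Bool) → Bool)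
    (hg0 : walsh g (fun _ => false) = 0) (hh0 : walsh h (fun _ => false) = 0)
    (β : ι → Bool) (hβ : bwt β = 1) (hβmax : ∀ v : ι → Bool, walsh g v ^ 2 ≤ walsh g β ^ 2) :
    Wmax (disjComp g h) = walsh g β ^ 2 * Wmax h := by
  classical
  have hWh_pos := Wmax_pos h
  obtain ⟨αh, hαh⟩ := exists_Wmax h
  have hαh_ne : αh ≠ (fun _ => false) := by
    intro e
    rw [e, hh0] at hαh
    simp at hαh
    rw [← hαh] at hWh_pos
    linarith
  obtain ⟨i₀, hi₀⟩ := Finset.card_eq_one.mp hβ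
  have hβi₀ : β i₀ = true := by
    have : i₀ ∈ Finset.univ.filter (fun i => β i = true) :=
      hi₀ ▸ Finset.mem_singleton_self i₀
    exact (Finset.mem_filter.mp this).2
  have hβother : ∀ i, i ≠ i₀ → β i = false := by
    intro i hi
    by_contra hcon
    have hmem : i ∈ Finset.univ.filter (fun i => β i = true) :=
      Finset.mem_filter.mpr ⟨Finset.mem_univ i, by revert hcon; cases β i <;> simp⟩
    rw [hi₀] at hmem
    exact hi (Finset.mem_singleton.mp hmem)
  have bound : ∀ α : ι × κ → Bool,
      walsh (disjComp g h) α ^ 2 ≤ walsh g β ^ 2 * Wmax h := by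
    intro α
    rw [walsh_disjComp g h hh0 α, mul_pow, ← Finset.prod_pow]
    by_cases hall : ∀ i, blk α i = (fun _ => false)
    · have hg : gam α = (fun _ => false) := funext fun i => by unfold gam; rw [if_pos (hall i)]
      rw [hg, hg0]
      simp only [ne_eq, OfNat.ofNat_ne_zero, not_false_eq_true, zero_pow, zero_mul]
      exact mul_nonneg (sq_nonneg _) (le_of_lt hWh_pos)
    · push_neg at hall
      obtain ⟨i₁, hne⟩ := hall
      have h1 : walsh g (gam α) ^ 2 ≤ walsh g β ^ 2 := hβmax _
      have h2 : ∏ i, (if blk α i = (fun _ => false) then 1 else walsh h (blk α i)) ^ 2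
          ≤ Wmax h := by
        rw [← Finset.mul_prod_erase univ _ (Finset.mem_univ i₁)]
        calc (if blk α i₁ = (fun _ => false) then 1 else walsh h (blk α i₁)) ^ 2 *
              ∏ i ∈ univ.erase i₁,
                (if blk α i = (fun _ => false) then 1 else walsh h (blk α i)) ^ 2
            ≤ Wmax h * 1 := by
              apply mul_le_mul
              · rw [if_neg hne]; exact le_Wmax h _
              · apply Finset.prod_le_one
                · intro i _; exact sq_nonneg _
                · intro i _
                  by_cases hb : blk α i = (fun _ => false)
                  · rw [if_pos hb]; norm_num
                  · rw [if_neg hb]; exact walsh_sq_le_one h _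
              · exact Finset.prod_nonneg fun i _ => sq_nonneg _
              · exact le_of_lt hWh_pos
          _ = Wmax h := mul_one _
      exact mul_le_mul h1 h2 (Finset.prod_nonneg fun i _ => sq_nonneg _) (sq_nonneg _)
  apply le_antisymm
  · obtain ⟨αs, hαs⟩ := exists_Wmax (disjComp g h)
    rw [← hαs]
    exact bound αs
  · set α : ι × κ → Bool := fun p => if p.1 = i₀ then αh p.2 else false with hα
    have hblk : ∀ i, blk α i = if i = i₀ then αh else (fun _ => false) := by
      intro i
      by_cases hi : i = i₀
      · funext j; simp [blk, hα, hi]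
      · funext j; simp [blk, hα, hi]
    have hgam : gam α = β := by
      funext i
      unfold gam
      by_cases hi : i = i₀
      · subst hi
        rw [hblk i, if_pos rfl, if_neg hαh_ne, hβi₀]
      · rw [hblk i, if_neg hi, if_pos rfl, hβother i hi]
    have hval : walsh (disjComp g h) α = walsh g β * walsh h αh := by
      rw [walsh_disjComp g h hh0 α, hgam]
      congr 1
      have : ∀ i, (if blk α i = (fun _ => false) then 1 else walsh h (blk α i))
          = if i = i₀ then walsh h αh else 1 := by
        intro i
        by_cases hi : i = i₀
        · subst hi
          rw [hblk i, if_pos rfl, if_pos rfl, if_neg hαh_ne]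
        · rw [hblk i, if_neg hi, if_neg hi, if_pos rfl]
      rw [Finset.prod_congr rfl fun i _ => this i, Finset.prod_ite_eq' univ i₀
        (fun _ => walsh h αh)]
      simp
  -- now Wg β² * Wmax h = walsh(...)² ≤ Wmax
    calc walsh g β ^ 2 * Wmax h = walsh (disjComp g h) α ^ 2 := by
          rw [hval, mul_pow, hαh]
      _ ≤ Wmax (disjComp g h) := le_Wmax _ _

end OT

/-- Min-entropy/influence ratio of the O'Donnell–Tan recursion: if `g` is balanced and its
maximal squared Walsh coefficient is attained at some weight-one `β`, then
`H_∞(f_m)/Inf(f_m) = (H_∞(g)/Inf(g))·((m+1)/Inf(g)^m)`. -/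
theorem stmt4 {l : ℕ} (hl : 0 < l) (g : (Fin l → Bool) → Bool) (hg : balanced g)
    (β : Fin l → Bool) (hβ : bwt β = 1)
    (hmax : ∀ v : Fin l → Bool, (walsh g v) ^ 2 ≤ (walsh g β) ^ 2) :
    ∀ m : ℕ, minEntropy (OTfun g m) / influence (OTfun g m) =
      minEntropy g / influence g * ((m + 1 : ℝ) / influence g ^ m) := by
  classical
  have hg0 : walsh g (fun _ => false) = 0 :=
    OT.balanced_walsh_zero g hg (by simpa using hl)
  have hWg : OT.Wmax g = walsh g β ^ 2 := by
    apply le_antisymm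
    · obtain ⟨a, ha⟩ := OT.exists_Wmax g
      rw [← ha]; exact hmax a
    · exact OT.le_Wmax g β
  have main : ∀ m : ℕ, OT.Wmax (OTfun g m) = (walsh g β ^ 2) ^ (m + 1)
      ∧ influence (OTfun g m) = influence g ^ (m + 1)
      ∧ walsh (OTfun g m) (fun _ => false) = 0 := by
    intro m
    induction m with
    | zero =>
      refine ⟨by rw [pow_one]; exact hWg, by rw [pow_one]; rfl, hg0⟩
    | succ m ih =>
      obtain ⟨ihW, ihI, ih0⟩ := ih
      have e1 : OT.Wmax (OTfun g (m + 1)) = walsh g β ^ 2 * OT.Wmax (OTfun g m) :=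
        OT.Wmax_disjComp g (OTfun g m) hg0 ih0 β hβ hmax
      have e2 : influence (OTfun g (m + 1)) = influence g * influence (OTfun g m) :=
        OT.influence_disjComp g (OTfun g m) ih0
      have e3 : walsh (OTfun g (m + 1)) (fun _ => false) = 0 := by
        have hcomp : walsh (OTfun g (m + 1)) (fun _ => false)
            = walsh g (OT.gam (fun _ => false)) *
              ∏ i, (if OT.blk (fun _ : Fin l × OTIndex l m => false) i = (fun _ => false)
                    then 1 else walsh (OTfun g m) (OT.blk (fun _ => false) i)) :=
          OT.walsh_disjComp g (OTfun g m) ih0 (fun _ => false)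
        have hgz : OT.gam (fun _ : Fin l × OTIndex l m => false)
            = (fun _ : Fin l => false) := by
          funext i
          unfold OT.gam
          exact if_pos rfl
        rw [hcomp, hgz, hg0, zero_mul]
      refine ⟨?_, ?_, e3⟩
      · rw [e1, ihW]; ring
      · rw [e2, ihI]; ring
  intro m
  obtain ⟨hW, hI, _⟩ := main m
  have hmin : minEntropy (OTfun g m)
      = ((m : ℝ) + 1) * Real.logb 2 (1 / walsh g β ^ 2) := by
    rw [OT.minEntropy_eq (OTfun g m), hW, ← one_div_pow, Real.logb_pow]
    push_cast
    ring
  have hming : minEntropy g = Real.logb 2 (1 / walsh g β ^ 2) := by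
    rw [OT.minEntropy_eq g, hWg]
  rw [hmin, hI, hming]
  by_cases hIg : influence g = 0
  · rw [hIg]
    simp
  · have h1 : influence g ^ (m + 1) ≠ 0 := pow_ne_zero _ hIg
    have h2 : influence g ^ m ≠ 0 := pow_ne_zero _ hIg
    field_simp
    ring
end

section
/- Let g be an n-variable Boolean function, b ∈ F_2, and let g_b be the (n+1)-variable Boolean function g_b(X_{n+1}, X_n, …, X_1) = (1 ⊕ X_{n+1})·g(X_n, …, X_1) ⊕ X_{n+1}·(b ⊕ g(1⊕X_n, …, 1⊕X_1)). Then for every β = (a, α) ∈ F_2^{n+1} with a ∈ F_2 and α ∈ F_2^n, W_{g_b}(β) = ((1 + (−1)^{b + wt(β)})/2) · W_g(α), where wt(β) is the Hamming weight of β. -/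
open Finset

lemma bwt_eq_sum {ι : Type*} [Fintype ι] (α : ι → Bool) :
    bwt α = ∑ i, b2n (α i) := by
  rw [bwt, Finset.card_filter]
  refine Finset.sum_congr rfl fun i _ => ?_
  cases α i <;> simp [b2n]

lemma bwt_cons {n : ℕ} (a : Bool) (α : Fin n → Bool) :
    bwt (Fin.cons a α) = b2n a + bwt α := by
  simp [bwt_eq_sum, Fin.sum_univ_succ]

lemma neg_one_pow_xor (b c : Bool) :
    ((-1 : ℝ)) ^ b2n (xor b c) = (-1) ^ b2n b * (-1) ^ b2n c := by
  cases b <;> cases c <;> simp [b2n]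

lemma sum_pi_bool_succ {n : ℕ} (F : (Fin (n + 1) → Bool) → ℝ) :
    ∑ x : Fin (n + 1) → Bool, F x =
      (∑ y : Fin n → Bool, F (Fin.cons false y)) +
      ∑ y : Fin n → Bool, F (Fin.cons true y) := by
  rw [← Equiv.sum_comp (Fin.consEquiv fun _ => Bool) F, Fintype.sum_prod_type,
    Fintype.sum_bool]
  rw [add_comm]
  rfl

lemma sum_not_reindex {n : ℕ} (F : (Fin n → Bool) → ℝ) :
    ∑ y : Fin n → Bool, F (fun i => !y i) = ∑ y : Fin n → Bool, F y := by
  apply Fintype.sum_bijective (fun y : Fin n → Bool => fun i => !y i)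
  · exact Function.Involutive.bijective (fun y => by funext i; simp)
  · intro y; rfl

/-- Walsh transform of the palindromic-type construction:
`W_{g_b}(a, α) = ((1 + (−1)^{b + wt(a,α)})/2)·W_g(α)`. -/
theorem stmt6 {n : ℕ} (g : (Fin n → Bool) → Bool) (b : Bool)
    (a : Bool) (α : Fin n → Bool) :
    walsh (palin g b) (Fin.cons a α) =
      (1 + (-1 : ℝ) ^ (b2n b + bwt (Fin.cons a α))) / 2 * walsh g α := by
  have key : ∀ y : Fin n → Bool,
      (-1 : ℝ) ^ (b2n (xor b (g y)) + b2n a + ∑ i, b2n (!y i && α i)) =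
        (-1) ^ (b2n b + b2n a + bwt α) *
          (-1) ^ (b2n (g y) + ∑ i, b2n (y i && α i)) := by
    intro y
    have hAB : (∑ i, b2n (!y i && α i)) + ∑ i, b2n (y i && α i) = bwt α := by
      rw [← Finset.sum_add_distrib, bwt_eq_sum]
      refine Finset.sum_congr rfl fun i _ => ?_
      cases hy : y i <;> cases hα : α i <;> simp [b2n]
    have hA : ((-1 : ℝ)) ^ (∑ i, b2n (!y i && α i)) =
        (-1) ^ bwt α * (-1) ^ (∑ i, b2n (y i && α i)) := by
      rw [← hAB, pow_add, mul_assoc, ← pow_add, ← two_mul, pow_mul, neg_one_sq,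
        one_pow, mul_one]
    rw [pow_add, pow_add, neg_one_pow_xor, hA]
    ring
  have hin : ∀ (x0 : Bool) (y : Fin n → Bool),
      (∑ i : Fin (n + 1), b2n ((Fin.cons x0 y : Fin (n+1) → Bool) i &&
          (Fin.cons a α : Fin (n+1) → Bool) i)) =
        b2n (x0 && a) + ∑ i, b2n (y i && α i) := by
    intro x0 y
    rw [Fin.sum_univ_succ]
    simp only [Fin.cons_zero, Fin.cons_succ]
  have hsplit := sum_pi_bool_succ
    (fun x => (-1 : ℝ) ^ (b2n (palin g b x) + ∑ i, b2n (x i && (Fin.cons a α : Fin (n+1) → Bool) i)))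
  have hfalse : ∀ y : Fin n → Bool,
      (-1 : ℝ) ^ (b2n (palin g b (Fin.cons false y)) +
          ∑ i, b2n ((Fin.cons false y : Fin (n+1) → Bool) i && (Fin.cons a α : Fin (n+1) → Bool) i)) =
        (-1) ^ (b2n (g y) + ∑ i, b2n (y i && α i)) := by
    intro y
    rw [hin false y]
    simp [palin, b2n]
  have htrue : ∀ y : Fin n → Bool,
      (-1 : ℝ) ^ (b2n (palin g b (Fin.cons true y)) +
          ∑ i, b2n ((Fin.cons true y : Fin (n+1) → Bool) i && (Fin.cons a α : Fin (n+1) → Bool) i)) =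
        (-1) ^ (b2n (xor b (g fun i => !y i)) + b2n a + ∑ i, b2n (y i && α i)) := by
    intro y
    rw [hin true y]
    simp [palin, b2n, add_assoc]
  have htruesum : (∑ y : Fin n → Bool, ((-1 : ℝ)) ^
      (b2n (xor b (g fun i => !y i)) + b2n a + ∑ i, b2n (y i && α i))) =
      (-1) ^ (b2n b + b2n a + bwt α) *
        ∑ y : Fin n → Bool, (-1) ^ (b2n (g y) + ∑ i, b2n (y i && α i)) := by
    rw [← sum_not_reindex (fun y => ((-1 : ℝ)) ^
      (b2n (xor b (g fun i => !y i)) + b2n a + ∑ i, b2n (y i && α i)))]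
    rw [Finset.mul_sum]
    refine Finset.sum_congr rfl fun y _ => ?_
    simpa using key y
  set S := ∑ y : Fin n → Bool, ((-1 : ℝ)) ^ (b2n (g y) + ∑ i, b2n (y i && α i))
  have h1 : walsh (palin g b) (Fin.cons a α) =
      (2 ^ (n + 1) : ℝ)⁻¹ * (S + (-1) ^ (b2n b + b2n a + bwt α) * S) := by
    rw [walsh, hsplit]
    simp only [Fintype.card_fin]
    congr 1
    rw [Finset.sum_congr rfl fun y _ => hfalse y,
      Finset.sum_congr rfl fun y _ => htrue y, htruesum]
  rw [h1, walsh, bwt_cons, Fintype.card_fin]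
  have h2 : (2 : ℝ) ^ (n + 1) = 2 * 2 ^ n := by ring
  rw [h2, ← add_assoc]
  field_simp
  ring
end

section
/- Let g be an n-variable Boolean function, b ∈ F_2, and let g_b be the (n+1)-variable Boolean function g_b(X_{n+1}, X_n, …, X_1) = (1 ⊕ X_{n+1})·g(X_n, …, X_1) ⊕ X_{n+1}·(b ⊕ g(1⊕X_n, …, 1⊕X_1)). Then Inf(g_b) = Inf(g) + ε_b(g), where ε_b(g) = Σ_{α ∈ F_2^n : wt(α) ≢ b (mod 2)} W_g(α)². -/
open Finset

lemma char_mul (p q a : Bool) :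
    (-1:ℝ)^(b2n (p && a)) * (-1:ℝ)^(b2n (q && a)) = (-1:ℝ)^(b2n ((xor p q) && a)) := by
  cases p <;> cases q <;> cases a <;> norm_num [b2n]

lemma sum_char {n : ℕ} (v : Fin n → Bool) :
    ∑ α : Fin n → Bool, (-1:ℝ)^(∑ i, b2n (v i && α i)) =
      if v = (fun _ => false) then (2:ℝ)^n else 0 := by
  have h1 : ∀ α : Fin n → Bool, (-1:ℝ)^(∑ i, b2n (v i && α i)) =
      ∏ i, (-1:ℝ)^(b2n (v i && α i)) := by
    intro α; rw [Finset.prod_pow_eq_pow_sum]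
  simp only [h1]
  have h2 : ∑ α : Fin n → Bool, ∏ i, (-1:ℝ)^(b2n (v i && α i)) =
      ∑ α ∈ Fintype.piFinset (fun _ : Fin n => (Finset.univ : Finset Bool)),
        ∏ i, (-1:ℝ)^(b2n (v i && α i)) := by
    rw [Fintype.piFinset_univ]
  rw [h2, ← Finset.prod_univ_sum (fun _ : Fin n => (Finset.univ : Finset Bool)) (fun i a => (-1:ℝ)^(b2n (v i && a)))]
  have h3 : ∀ i : Fin n, (∑ a : Bool, (-1:ℝ)^(b2n (v i && a))) =
      if v i = false then 2 else 0 := by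
    intro i; cases h : v i <;> norm_num [b2n]
  rw [Finset.prod_congr rfl (fun i _ => h3 i)]
  by_cases hv : v = fun _ => false
  · simp [hv]
  · rw [if_neg hv]
    obtain ⟨i, hi⟩ : ∃ i, v i ≠ false := by
      by_contra h; push_neg at h; exact hv (funext fun i => by simpa using h i)
    exact Finset.prod_eq_zero (Finset.mem_univ i) (by simp [hi])

lemma pmul {n : ℕ} (u v α : Fin n → Bool) :
    (-1:ℝ)^(∑ i, b2n (u i && α i)) * (-1:ℝ)^(∑ i, b2n (v i && α i))
      = (-1:ℝ)^(∑ i, b2n ((xor (u i) (v i)) && α i)) := by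
  rw [← Finset.prod_pow_eq_pow_sum, ← Finset.prod_pow_eq_pow_sum,
    ← Finset.prod_pow_eq_pow_sum, ← Finset.prod_mul_distrib]
  exact Finset.prod_congr rfl (fun i _ => char_mul (u i) (v i) (α i))

lemma key {n : ℕ} (g : (Fin n → Bool) → Bool) (w : Fin n → Bool) :
    ∑ α : Fin n → Bool, (-1:ℝ)^(∑ i, b2n (w i && α i)) * (walsh g α)^2
    = ((2:ℝ)^n)⁻¹ * ∑ x : Fin n → Bool,
        (-1:ℝ)^(b2n (g x) + b2n (g (fun i => xor (w i) (x i)))) := by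
  set c : ℝ := ((2:ℝ)^n)⁻¹ with hc
  have expand : ∀ α : Fin n → Bool,
      (-1:ℝ)^(∑ i, b2n (w i && α i)) * (walsh g α)^2
      = ∑ x : Fin n → Bool, ∑ y : Fin n → Bool,
          c * c * ((-1:ℝ)^(b2n (g x) + b2n (g y)) *
          (-1:ℝ)^(∑ i, b2n ((xor (w i) (xor (x i) (y i))) && α i))) := by
    intro α
    have hw : walsh g α = c * ∑ x : Fin n → Bool,
        (-1:ℝ)^(b2n (g x) + ∑ i, b2n (x i && α i)) := by
      rw [walsh, Fintype.card_fin, hc]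
    rw [hw, mul_pow, sq, sq, Finset.sum_mul_sum]
    simp only [Finset.mul_sum]
    refine Finset.sum_congr rfl (fun x _ => ?_)
    refine Finset.sum_congr rfl (fun y _ => ?_)
    have hpt : (-1:ℝ)^(∑ i, b2n (w i && α i)) *
        ((-1:ℝ)^(b2n (g x) + ∑ i, b2n (x i && α i)) *
         (-1:ℝ)^(b2n (g y) + ∑ i, b2n (y i && α i)))
        = (-1:ℝ)^(b2n (g x) + b2n (g y)) *
          (-1:ℝ)^(∑ i, b2n ((xor (w i) (xor (x i) (y i))) && α i)) := by
      rw [pow_add, pow_add, ← pmul w (fun i => xor (x i) (y i)) α, ← pmul x y α, pow_add]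
      ring
    rw [← hpt]; ring
  calc ∑ α : Fin n → Bool, (-1:ℝ)^(∑ i, b2n (w i && α i)) * (walsh g α)^2
      = ∑ α : Fin n → Bool, ∑ x : Fin n → Bool, ∑ y : Fin n → Bool,
          c * c * ((-1:ℝ)^(b2n (g x) + b2n (g y)) *
          (-1:ℝ)^(∑ i, b2n ((xor (w i) (xor (x i) (y i))) && α i))) :=
        Finset.sum_congr rfl (fun α _ => expand α)
    _ = ∑ x : Fin n → Bool, ∑ y : Fin n → Bool,
          c * c * ((-1:ℝ)^(b2n (g x) + b2n (g y)) *
          ∑ α : Fin n → Bool,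
          (-1:ℝ)^(∑ i, b2n ((xor (w i) (xor (x i) (y i))) && α i))) := by
        rw [Finset.sum_comm]
        refine Finset.sum_congr rfl (fun x _ => ?_)
        rw [Finset.sum_comm]
        refine Finset.sum_congr rfl (fun y _ => ?_)
        rw [Finset.mul_sum, Finset.mul_sum]
    _ = ∑ x : Fin n → Bool,
          c * c * ((-1:ℝ)^(b2n (g x) + b2n (g (fun i => xor (w i) (x i)))) * (2:ℝ)^n) := by
        refine Finset.sum_congr rfl (fun x _ => ?_)
        rw [Finset.sum_eq_single (fun i => xor (w i) (x i))]
        · rw [sum_char, if_pos (by funext i; cases hwi : w i <;> cases hxi : x i <;> simp [hwi, hxi])]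
        · intro y _ hy
          rw [sum_char, if_neg, mul_zero, mul_zero]
          intro h
          apply hy
          funext i
          have := congrFun h i
          cases hwi : w i <;> cases hxi : x i <;> cases hyi : y i <;>
            simp [hwi, hxi, hyi] at this ⊢
        · intro h; exact absurd (Finset.mem_univ _) h
    _ = c * ∑ x : Fin n → Bool,
          (-1:ℝ)^(b2n (g x) + b2n (g (fun i => xor (w i) (x i)))) := by
        rw [Finset.mul_sum]
        refine Finset.sum_congr rfl (fun x _ => ?_)
        have h2 : c * c * (2:ℝ)^n = c := by
          rw [hc]; field_simp
        calc c * c * ((-1:ℝ)^(b2n (g x) + b2n (g (fun i => xor (w i) (x i)))) * (2:ℝ)^n)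
            = (c * c * (2:ℝ)^n) * (-1:ℝ)^(b2n (g x) + b2n (g (fun i => xor (w i) (x i)))) := by ring
          _ = c * (-1:ℝ)^(b2n (g x) + b2n (g (fun i => xor (w i) (x i)))) := by rw [h2]

lemma eps_eq {n : ℕ} (g : (Fin n → Bool) → Bool) (b : Bool) :
    eps g b = ((2:ℝ)^n - (-1:ℝ)^(b2n b) *
      ∑ x : Fin n → Bool, (-1:ℝ)^(b2n (g x) + b2n (g (fun i => !x i)))) / (2 * 2^n) := by
  set T : ℝ := ∑ x : Fin n → Bool, (-1:ℝ)^(b2n (g x) + b2n (g (fun i => !x i))) with hT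
  have parseval : ∑ α : Fin n → Bool, (walsh g α)^2 = 1 := by
    have h := key g (fun _ => false)
    simp only [Bool.false_and, Bool.false_xor] at h
    have h1 : ∀ α : Fin n → Bool, (∑ i : Fin n, b2n false) = 0 := by
      intro _; simp [b2n]
    rw [h1 (fun _ => false)] at h
    simp only [pow_zero, one_mul] at h
    rw [h]
    have h2 : ∀ x : Fin n → Bool, (-1:ℝ)^(b2n (g x) + b2n (g fun i => x i)) = 1 := by
      intro x
      have : (g fun i => x i) = g x := by rw [show (fun i => x i) = x from rfl]
      rw [this, Even.neg_one_pow ⟨b2n (g x), by ring⟩]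
    rw [Finset.sum_congr rfl (fun x _ => h2 x), Finset.sum_const]
    simp [Finset.card_univ]
  have auto : ∑ α : Fin n → Bool, (-1:ℝ)^(bwt α) * (walsh g α)^2 = ((2:ℝ)^n)⁻¹ * T := by
    have h := key g (fun _ => true)
    simp only [Bool.true_and, Bool.true_xor] at h
    rw [← h]
    refine Finset.sum_congr rfl (fun α _ => ?_)
    congr 1
    congr 1
    rw [bwt, Finset.card_filter]
    exact Finset.sum_congr rfl (fun i _ => by cases α i <;> simp [b2n])
  have step : eps g b = ∑ α : Fin n → Bool,
      ((1 - (-1:ℝ)^(b2n b) * (-1:ℝ)^(bwt α)) / 2) * (walsh g α)^2 := by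
    rw [eps, Finset.sum_filter]
    refine Finset.sum_congr rfl (fun α _ => ?_)
    rcases Nat.mod_two_eq_zero_or_one (bwt α) with h | h
    · have he : (-1:ℝ)^(bwt α) = 1 := Even.neg_one_pow (Nat.even_iff.2 h)
      cases b <;> simp [b2n, h, he]
    · have he : (-1:ℝ)^(bwt α) = -1 := Odd.neg_one_pow (Nat.odd_iff.2 h)
      cases b <;> simp [b2n, h, he]
  rw [step]
  have expand : ∀ α : Fin n → Bool,
      ((1 - (-1:ℝ)^(b2n b) * (-1:ℝ)^(bwt α)) / 2) * (walsh g α)^2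
      = (walsh g α)^2 / 2 - ((-1:ℝ)^(b2n b) / 2) * ((-1:ℝ)^(bwt α) * (walsh g α)^2) := by
    intro α; ring
  rw [Finset.sum_congr rfl (fun α _ => expand α), Finset.sum_sub_distrib]
  rw [← Finset.sum_div, parseval, ← Finset.mul_sum, auto]
  have h2n : (2:ℝ)^n ≠ 0 := by positivity
  field_simp

lemma eps_card {n : ℕ} (g : (Fin n → Bool) → Bool) (b : Bool) :
    eps g b = ((Finset.univ.filter fun y : Fin n → Bool =>
        ¬ g y = xor b (g fun i => !y i)).card : ℝ) / 2^n := by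
  rw [eps_eq]
  set N : ℕ := (Finset.univ.filter fun y : Fin n → Bool =>
      ¬ g y = xor b (g fun i => !y i)).card with hN
  have hterm : ∀ x : Fin n → Bool,
      (-1:ℝ)^(b2n b) * (-1:ℝ)^(b2n (g x) + b2n (g (fun i => !x i)))
      = if g x = xor b (g fun i => !x i) then (1:ℝ) else -1 := by
    intro x
    cases b <;> cases hx : g x <;> cases hy : (g fun i => !x i) <;>
      simp [b2n, hx, hy]
  have hsum : (-1:ℝ)^(b2n b) *
      ∑ x : Fin n → Bool, (-1:ℝ)^(b2n (g x) + b2n (g (fun i => !x i)))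
      = (2:ℝ)^n - 2 * N := by
    rw [Finset.mul_sum, Finset.sum_congr rfl (fun x _ => hterm x)]
    have split : ∀ x : Fin n → Bool,
        (if g x = xor b (g fun i => !x i) then (1:ℝ) else -1)
        = (if g x = xor b (g fun i => !x i) then (1:ℝ) else 0)
          - (if ¬ g x = xor b (g fun i => !x i) then (1:ℝ) else 0) := by
      intro x; by_cases h : g x = xor b (g fun i => !x i) <;> simp [h]
    rw [Finset.sum_congr rfl (fun x _ => split x), Finset.sum_sub_distrib,
      Finset.sum_boole, Finset.sum_boole]
    have hc : (Finset.univ.filter fun y : Fin n → Bool =>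
        g y = xor b (g fun i => !y i)).card + N = 2^n := by
      rw [hN]
      have := Finset.card_filter_add_card_filter_not
        (s := (Finset.univ : Finset (Fin n → Bool)))
        (p := fun y => g y = xor b (g fun i => !y i))
      simpa [Finset.card_univ] using this
    have : ((Finset.univ.filter fun y : Fin n → Bool =>
        g y = xor b (g fun i => !y i)).card : ℝ) = 2^n - N := by
      have := congrArg (Nat.cast (R := ℝ)) hc
      push_cast at this
      linarith
    rw [this]
    ring
  rw [hsum]
  have h2n : (2:ℝ)^n ≠ 0 := by positivity
  field_simp
  ring

def consE (n : ℕ) : Bool × (Fin n → Bool) ≃ (Fin (n + 1) → Bool) where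
  toFun p := Fin.cons p.1 p.2
  invFun x := (x 0, fun i => x i.succ)
  left_inv p := by simp
  right_inv x := by
    simp only
    exact Fin.cons_self_tail x

def negE (n : ℕ) : Equiv.Perm (Fin n → Bool) :=
  Function.Involutive.toPerm (fun y j => !y j) (fun y => by funext j; simp)

lemma card_zero {n : ℕ} (g : (Fin n → Bool) → Bool) (b : Bool) :
    (Finset.univ.filter fun x : Fin (n+1) → Bool =>
      palin g b x ≠ palin g b (Function.update x 0 (!x 0))).card
    = 2 * (Finset.univ.filter fun y : Fin n → Bool =>
      ¬ g y = xor b (g fun i => !y i)).card := by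
  rw [Finset.card_filter, Finset.card_filter]
  rw [← Fintype.sum_equiv (consE n)
    (fun p => if palin g b (consE n p) ≠
      palin g b (Function.update (consE n p) 0 (!(consE n p 0))) then 1 else 0)
    _ (fun p => rfl)]
  rw [Fintype.sum_prod_type, Fintype.sum_bool]
  have htrue : ∀ y : Fin n → Bool,
      (if palin g b (consE n (true, y)) ≠
        palin g b (Function.update (consE n (true, y)) 0 (!(consE n (true, y) 0)))
        then 1 else 0)
      = if ¬ g y = xor b (g fun i => !y i) then 1 else 0 := by
    intro y
    have h1 : consE n (true, y) = Fin.cons true y := rfl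
    by_cases h : g y = xor b (g fun i => !y i) <;>
      simp [h1, palin, Fin.cons_zero, Fin.cons_succ, Fin.update_cons_zero, h, eq_comm]
  have hfalse : ∀ y : Fin n → Bool,
      (if palin g b (consE n (false, y)) ≠
        palin g b (Function.update (consE n (false, y)) 0 (!(consE n (false, y) 0)))
        then 1 else 0)
      = if ¬ g y = xor b (g fun i => !y i) then 1 else 0 := by
    intro y
    have h1 : consE n (false, y) = Fin.cons false y := rfl
    by_cases h : g y = xor b (g fun i => !y i) <;>
      simp [h1, palin, Fin.cons_zero, Fin.cons_succ, Fin.update_cons_zero, h, eq_comm]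
  rw [Finset.sum_congr rfl (fun y _ => htrue y), Finset.sum_congr rfl (fun y _ => hfalse y)]
  ring

lemma card_succ {n : ℕ} (g : (Fin n → Bool) → Bool) (b : Bool) (i : Fin n) :
    (Finset.univ.filter fun x : Fin (n+1) → Bool =>
      palin g b x ≠ palin g b (Function.update x i.succ (!x i.succ))).card
    = 2 * (Finset.univ.filter fun y : Fin n → Bool =>
      g y ≠ g (Function.update y i (!y i))).card := by
  rw [Finset.card_filter, Finset.card_filter]
  rw [← Fintype.sum_equiv (consE n)
    (fun p => if palin g b (consE n p) ≠
      palin g b (Function.update (consE n p) i.succ (!(consE n p i.succ))) then 1 else 0)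
    _ (fun p => rfl)]
  rw [Fintype.sum_prod_type, Fintype.sum_bool]
  have hupd : ∀ (a : Bool) (y : Fin n → Bool),
      Function.update (Fin.cons a y : Fin (n+1) → Bool) i.succ (!y i)
        = Fin.cons a (Function.update y i (!y i)) := by
    intro a y; rw [Fin.cons_update]
  have hfalse : ∀ y : Fin n → Bool,
      (if palin g b (consE n (false, y)) ≠
        palin g b (Function.update (consE n (false, y)) i.succ (!(consE n (false, y) i.succ)))
        then 1 else 0)
      = if g y ≠ g (Function.update y i (!y i)) then 1 else 0 := by
    intro y
    have h1 : consE n (false, y) = Fin.cons false y := rfl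
    have h2 : (Fin.cons false y : Fin (n+1) → Bool) i.succ = y i := Fin.cons_succ _ _ _
    rw [h1, h2, hupd]
    by_cases h : g y = g (Function.update y i (!y i)) <;>
      simp [palin, Fin.cons_zero, Fin.cons_succ, h]
  have hneg : ∀ y : Fin n → Bool,
      (fun j => !(Function.update y i (!y i) j))
        = Function.update (fun j => !y j) i (!((fun j => !y j) i)) := by
    intro y
    funext j
    by_cases h : j = i
    · subst h; simp
    · simp [Function.update_of_ne h]
  have htrue : ∀ y : Fin n → Bool,
      (if palin g b (consE n (true, y)) ≠
        palin g b (Function.update (consE n (true, y)) i.succ (!(consE n (true, y) i.succ)))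
        then 1 else 0)
      = if g ((negE n) y) ≠
          g (Function.update ((negE n) y) i (!((negE n) y i))) then 1 else 0 := by
    intro y
    have h1 : consE n (true, y) = Fin.cons true y := rfl
    have h2 : (Fin.cons true y : Fin (n+1) → Bool) i.succ = y i := Fin.cons_succ _ _ _
    have h3 : (negE n) y = fun j => !y j := rfl
    rw [h1, h2, hupd, h3]
    have h4 : ∀ u v : Bool, (xor b u ≠ xor b v) ↔ (u ≠ v) := by
      intro u v; cases b <;> simp
    have hp1 : palin g b (Fin.cons true y) = xor b (g fun j => !y j) := by simp [palin]
    have hp2 : palin g b (Fin.cons true (Function.update y i (!y i)))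
        = xor b (g fun j => !(Function.update y i (!y i) j)) := by simp [palin]
    have hcond : (palin g b (Fin.cons true y) ≠
        palin g b (Fin.cons true (Function.update y i (!y i))))
        ↔ ((g fun j => !y j) ≠
            g (Function.update (fun j => !y j) i (!((fun j => !y j) i)))) := by
      rw [hp1, hp2, hneg y]; exact h4 _ _
    exact if_congr hcond rfl rfl
  rw [Finset.sum_congr rfl (fun y _ => htrue y), Finset.sum_congr rfl (fun y _ => hfalse y)]
  rw [Fintype.sum_equiv (negE n)
    (fun y => if g ((negE n) y) ≠ g (Function.update ((negE n) y) i (!((negE n) y i))) then 1 else 0)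
    (fun y => if g y ≠ g (Function.update y i (!y i)) then 1 else 0)
    (fun y => rfl)]
  ring

/-- Influence of the palindromic-type construction: `Inf(g_b) = Inf(g) + ε_b(g)`. -/
theorem stmt8 {n : ℕ} (g : (Fin n → Bool) → Bool) (b : Bool) :
    influence (palin g b) = influence g + eps g b := by
  rw [eps_card]
  rw [influence, influence, Fintype.card_fin, Fintype.card_fin, Fin.sum_univ_succ]
  rw [card_zero g b]
  rw [Finset.sum_congr rfl (fun i _ => by rw [card_succ g b i] :
    ∀ i ∈ Finset.univ, (((Finset.univ.filter fun x : Fin (n+1) → Bool =>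
      palin g b x ≠ palin g b (Function.update x (Fin.succ i) (!x (Fin.succ i)))).card : ℝ)
        / 2 ^ (n+1)
      = ((2 * (Finset.univ.filter fun y : Fin n → Bool =>
          g y ≠ g (Function.update y i (!y i))).card : ℕ) : ℝ) / 2 ^ (n+1)))]
  have h2 : ((2:ℝ))^(n+1) = 2 * 2^n := by ring
  push_cast
  rw [h2]
  have hsum : ∑ i : Fin n,
      (2 * ((Finset.univ.filter fun y : Fin n → Bool =>
        g y ≠ g (Function.update y i (!y i))).card : ℝ)) / (2 * 2^n)
      = ∑ i : Fin n, ((Finset.univ.filter fun y : Fin n → Bool =>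
        g y ≠ g (Function.update y i (!y i))).card : ℝ) / 2^n := by
    refine Finset.sum_congr rfl (fun i _ => ?_)
    rw [mul_div_mul_left _ _ (by norm_num : (2:ℝ) ≠ 0)]
  rw [hsum, mul_div_mul_left _ _ (by norm_num : (2:ℝ) ≠ 0)]
  ring
end
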